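/- arXiv:2207.12973 — 7 statements merged into one kernel-verified Lean document; each statement's English description precedes it below -/
import Mathlib

section
/- For 0 < p < 1 and any square-summable sequence x : ℕ → ℝ, the sequence y : ℕ → ℝ defined by y(0) = −√p·x(0) and y(t+1) = √p·y(t) + x(t) − √p·x(t+1) for all t ∈ ℕ is square-summable and satisfies Σ_{t=0}^∞ y(t)² = Σ_{t=0}^∞ x(t)² (i.e., the discrete all-pass operator T(z;p) = (1−√p z)/(z−√p) acts as an isometry on ℓ²(ℕ,ℝ)). -/
/-!
Write `a = √p` and track the state `u = y + a x` of the filter, which satisfies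
`u (t + 1) = a u t + (1 - a²) x t` and `u 0 = 0`. A direct computation gives the lossless energy
balance `(1 - a²) y t² + u (t + 1)² = (1 - a²) x t² + u t²`, which telescopes to
`(1 - a²) ∑_{t<N} y t² + u N² = (1 - a²) ∑_{t<N} x t²`. This bounds the partial sums of `y²`, and it
shows that `|u N|` converges; since `x t → 0` and `|a| < 1`, the recursion for `u` forces that limit
to be `0`, so the two series have the same sum.
-/

open Filter Topology Finset

theorem tendsto_zero_of_tendsto_norm_of_eq_smul_add {E : Type*} [SeminormedAddCommGroup E]
    [NormedSpace ℝ E] {u b : ℕ → E} {a c : ℝ} (ha : |a| < 1) (hb : Tendsto b atTop (𝓝 0))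
    (hrec : ∀ t, u (t + 1) = a • u t + b t) (hu : Tendsto (fun t => ‖u t‖) atTop (𝓝 c)) :
    Tendsto u atTop (𝓝 0) := by
  have hc : c ≤ |a| * c + 0 :=
    le_of_tendsto_of_tendsto' (hu.comp (tendsto_add_atTop_nat 1))
      ((hu.const_mul |a|).add (by simpa using hb.norm)) fun t => by
        simpa only [Function.comp, hrec, norm_smul, Real.norm_eq_abs] using
          norm_add_le (a • u t) (b t)
  have hc0 : 0 ≤ c := ge_of_tendsto' hu fun _ => norm_nonneg _
  obtain rfl : c = 0 := by nlinarith
  exact tendsto_zero_iff_norm_tendsto_zero.mpr hu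

theorem tendsto_abs_of_tendsto_sq {ι : Type*} {l : Filter ι} {u : ι → ℝ} {L : ℝ}
    (hu : Tendsto (fun t => u t ^ 2) l (𝓝 L)) : Tendsto (fun t => |u t|) l (𝓝 (Real.sqrt L)) :=
  ((Real.continuous_sqrt.tendsto L).comp hu).congr fun t => Real.sqrt_sq_eq_abs (u t)

theorem tendsto_zero_of_summable_sq {x : ℕ → ℝ} (hx : Summable fun t => x t ^ 2) :
    Tendsto x atTop (𝓝 0) := by
  have := tendsto_abs_of_tendsto_sq hx.tendsto_atTop_zero
  rw [Real.sqrt_zero] at this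
  exact (tendsto_zero_iff_abs_tendsto_zero x).mpr this

namespace AllPass

variable {a : ℝ} {x y : ℕ → ℝ}

def state (a : ℝ) (x y : ℕ → ℝ) (t : ℕ) : ℝ := y t + a * x t

theorem state_zero (hy0 : y 0 = -a * x 0) : state a x y 0 = 0 := by
  simp [state, hy0]

theorem state_succ (hyrec : ∀ t, y (t + 1) = a * y t + x t - a * x (t + 1)) (t : ℕ) :
    state a x y (t + 1) = a * state a x y t + (1 - a ^ 2) * x t := by
  simp only [state, hyrec t]
  ring

theorem energy_step (hyrec : ∀ t, y (t + 1) = a * y t + x t - a * x (t + 1)) (t : ℕ) :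
    (1 - a ^ 2) * y t ^ 2 + state a x y (t + 1) ^ 2
      = (1 - a ^ 2) * x t ^ 2 + state a x y t ^ 2 := by
  have hy : y t = state a x y t - a * x t := by simp [state]
  rw [state_succ hyrec, hy]
  ring

theorem energy_sum (hy0 : y 0 = -a * x 0)
    (hyrec : ∀ t, y (t + 1) = a * y t + x t - a * x (t + 1)) (N : ℕ) :
    (1 - a ^ 2) * ∑ t ∈ range N, y t ^ 2 + state a x y N ^ 2
      = (1 - a ^ 2) * ∑ t ∈ range N, x t ^ 2 := by
  induction N with
  | zero => simp [state_zero hy0]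
  | succ N ih =>
    simp only [sum_range_succ, mul_add]
    linarith [energy_step hyrec N]

variable (hy0 : y 0 = -a * x 0) (hyrec : ∀ t, y (t + 1) = a * y t + x t - a * x (t + 1))
  (ha : |a| < 1) (hx : Summable fun t => x t ^ 2)
include hy0 hyrec ha hx

theorem summable_sq : Summable fun t => y t ^ 2 := by
  have ha2 : 0 < 1 - a ^ 2 := by nlinarith [sq_abs a, abs_nonneg a]
  refine summable_of_sum_range_le (c := ∑' t, x t ^ 2) (fun t => sq_nonneg _) fun N => ?_
  have hN := energy_sum hy0 hyrec N
  have hxN := hx.sum_le_tsum (range N) fun t _ => sq_nonneg (x t)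
  nlinarith [sq_nonneg (state a x y N)]

theorem tsum_sq_eq : ∑' t, y t ^ 2 = ∑' t, x t ^ 2 := by
  have ha2 : 1 - a ^ 2 ≠ 0 := by nlinarith [sq_abs a, abs_nonneg a]
  have hstate_sq : Tendsto (fun N => state a x y N ^ 2) atTop
      (𝓝 ((1 - a ^ 2) * (∑' t, x t ^ 2 - ∑' t, y t ^ 2))) :=
    ((hx.hasSum.tendsto_sum_nat.sub (summable_sq hy0 hyrec ha hx).hasSum.tendsto_sum_nat).const_mul
      _).congr fun N => by rw [mul_sub]; linarith [energy_sum hy0 hyrec N]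
  have hstate : Tendsto (state a x y) atTop (𝓝 0) :=
    tendsto_zero_of_tendsto_norm_of_eq_smul_add ha
      (by simpa using (tendsto_zero_of_summable_sq hx).const_mul (1 - a ^ 2))
      (state_succ hyrec) (tendsto_abs_of_tendsto_sq hstate_sq)
  have hlim := tendsto_nhds_unique hstate_sq (by simpa using hstate.pow 2)
  linarith [(mul_eq_zero.mp hlim).resolve_left ha2]

end AllPass

theorem allpass_isometry_general (p : ℝ) (hp1 : p < 1)
    (x y : ℕ → ℝ) (hx : Summable fun t => x t ^ 2)
    (hy0 : y 0 = -Real.sqrt p * x 0)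
    (hyrec : ∀ t : ℕ, y (t + 1) = Real.sqrt p * y t + x t - Real.sqrt p * x (t + 1)) :
    Summable (fun t => y t ^ 2) ∧ (∑' t : ℕ, y t ^ 2) = ∑' t : ℕ, x t ^ 2 := by
  have ha : |Real.sqrt p| < 1 := by
    rw [abs_of_nonneg (Real.sqrt_nonneg p), Real.sqrt_lt' one_pos]
    linarith
  exact ⟨AllPass.summable_sq hy0 hyrec ha hx, AllPass.tsum_sq_eq hy0 hyrec ha hx⟩

/-- The discrete Laguerre functions in time-domain (not needed for this statement,
but the all-pass recursion below is the building block `T(z;p)`). -/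
theorem allpass_isometry (p : ℝ) (hp0 : 0 < p) (hp1 : p < 1)
    (x y : ℕ → ℝ) (hx : Summable fun t => x t ^ 2)
    (hy0 : y 0 = -Real.sqrt p * x 0)
    (hyrec : ∀ t : ℕ, y (t + 1) = Real.sqrt p * y t + x t - Real.sqrt p * x (t + 1)) :
    Summable (fun t => y t ^ 2) ∧ (∑' t : ℕ, y t ^ 2) = ∑' t : ℕ, x t ^ 2 :=
  allpass_isometry_general p hp1 x y hx hy0 hyrec
end

section
/- For every 0 < p < 1, the discrete Laguerre functions form a complete system in ℓ²(ℕ,ℝ): if w : ℕ → ℝ is square-summable and Σ_{t=0}^∞ w(t)·ℓ_j(t;p) = 0 for every j ∈ ℕ, then w = 0; equivalently, the closed linear span of {ℓ_j(·;p) : j ∈ ℕ} is all of ℓ²(ℕ,ℝ). -/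
/-- The discrete Laguerre functions `ℓ_j(t; p)` in time-domain. -/
noncomputable def discreteLaguerre (p : ℝ) : ℕ → ℕ → ℝ
  | 0, t => Real.sqrt (1 - p) * Real.sqrt p ^ t
  | j + 1, 0 => -Real.sqrt p * discreteLaguerre p j 0
  | j + 1, t + 1 =>
      Real.sqrt p * discreteLaguerre p (j + 1) t + discreteLaguerre p j t
        - Real.sqrt p * discreteLaguerre p j (t + 1)
  termination_by j t => (j, t)

/-!
Write `a = √p`. The generating function of `ℓ_j` is
`∑ₜ ℓ_j(t) xᵗ = √(1 - p) / (1 - a x) · ((x - a) / (1 - a x)) ^ j`, and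
`(x - a) / (1 - a x) = (1 - a²) · x / (1 - a x) - a`. Since `x ^ i / (1 - a x) ^ (i + 1)` generates
`t ↦ C(t, i) a ^ (t - i)`, the sequence `ℓ_j` is a combination of these sequences for `i ≤ j`,
with coefficient `√(1 - p) (1 - p) ^ j ≠ 0` at `i = j`. Hence orthogonality to every `ℓ_j` says
that all sums `∑ₜ w t · C(t, k) a ^ (t - k)` vanish. These are the Taylor coefficients at `a` of
`W x = ∑ₜ w t · x ^ t`, which is analytic on `(-1, 1)` because `w` is bounded. So `W` vanishes near
`a`, hence near `0` by the identity theorem, and its coefficients `w t` are all zero.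
-/

open Finset

section Algebra

variable {R : Type*}

section CommSemiring

variable [CommSemiring R]

def chooseMulPow (x : R) (k n : ℕ) : R := n.choose k * x ^ (n - k)

@[simp]
theorem chooseMulPow_zero_left (x : R) (n : ℕ) : chooseMulPow x 0 n = x ^ n := by
  simp [chooseMulPow]

theorem chooseMulPow_eq_zero_of_lt {x : R} {k n : ℕ} (h : n < k) : chooseMulPow x k n = 0 := by
  simp [chooseMulPow, Nat.choose_eq_zero_of_lt h]

@[simp]
theorem chooseMulPow_self (x : R) (n : ℕ) : chooseMulPow x n n = 1 := by
  simp [chooseMulPow]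

theorem chooseMulPow_succ_succ (x : R) (k n : ℕ) :
    chooseMulPow x (k + 1) (n + 1) = x * chooseMulPow x (k + 1) n + chooseMulPow x k n := by
  rcases lt_or_ge n k with h | h
  · simp [chooseMulPow_eq_zero_of_lt h, chooseMulPow_eq_zero_of_lt (Nat.succ_lt_succ h),
      chooseMulPow_eq_zero_of_lt (h.trans (Nat.lt_succ_self k))]
  rcases h.eq_or_lt with rfl | h
  · simp [chooseMulPow_eq_zero_of_lt (Nat.lt_succ_self k)]
  · obtain ⟨m, rfl⟩ := Nat.exists_eq_add_of_lt h
    simp only [chooseMulPow, Nat.choose_succ_succ', Nat.cast_add,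
      show k + m + 1 + 1 - (k + 1) = m + 1 by omega, show k + m + 1 - (k + 1) = m by omega,
      show k + m + 1 - k = m + 1 by omega, pow_succ]
    ring

theorem sum_range_mul_chooseMulPow_succ (x : R) (d : ℕ → R) (N n : ℕ) :
    ∑ i ∈ range (N + 1), d i * chooseMulPow x i (n + 1) =
      x * ∑ i ∈ range (N + 1), d i * chooseMulPow x i n +
        ∑ i ∈ range N, d (i + 1) * chooseMulPow x i n := by
  simp only [sum_range_succ' _ N, chooseMulPow_succ_succ, chooseMulPow_zero_left, mul_add,
    sum_add_distrib, mul_sum, pow_succ, mul_left_comm (d _) x]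
  ring

theorem add_pow_eq_sum_chooseMulPow (x y : R) (n : ℕ) :
    (x + y) ^ n = ∑ k ∈ range (n + 1), chooseMulPow x k n * y ^ k := by
  rw [add_comm, add_pow]
  exact sum_congr rfl fun k _ => by rw [chooseMulPow]; ring

theorem hasSum_chooseMulPow_mul_pow [TopologicalSpace R] (x y : R) (n : ℕ) :
    HasSum (fun k => chooseMulPow x k n * y ^ k) ((x + y) ^ n) := by
  have hsupp : ∀ k ∉ range (n + 1), chooseMulPow x k n * y ^ k = 0 := fun k hk => by
    rw [chooseMulPow_eq_zero_of_lt (by simpa using hk), zero_mul]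
  rw [add_pow_eq_sum_chooseMulPow]
  exact hasSum_sum_of_ne_finset_zero hsupp

end CommSemiring

variable [CommRing R]

-- `ℓ_j(t) = √(1 - p) · laguerreSum √p j t`: expand `((1 - a²) x / (1 - a x) - a) ^ j / (1 - a x)`.
def laguerreSum (a : R) (j t : ℕ) : R :=
  ∑ i ∈ range (j + 1), (1 - a ^ 2) ^ i * chooseMulPow (-a) i j * chooseMulPow a i t

theorem laguerreSum_zero_left (a : R) (t : ℕ) : laguerreSum a 0 t = a ^ t := by
  simp [laguerreSum]

theorem laguerreSum_zero_right (a : R) (j : ℕ) : laguerreSum a j 0 = (-a) ^ j := by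
  rw [laguerreSum, sum_eq_single 0] <;>
    simp +contextual [chooseMulPow_eq_zero_of_lt, Nat.pos_iff_ne_zero]

theorem laguerreSum_succ_succ (a : R) (j t : ℕ) :
    laguerreSum a (j + 1) (t + 1) =
      a * laguerreSum a (j + 1) t + laguerreSum a j t - a * laguerreSum a j (t + 1) := by
  have hcoeff : ∀ i, (1 - a ^ 2) ^ (i + 1) * chooseMulPow (-a) (i + 1) (j + 1) =
      (1 - a ^ 2) * ((1 - a ^ 2) ^ i * chooseMulPow (-a) i j) -
        a * ((1 - a ^ 2) ^ (i + 1) * chooseMulPow (-a) (i + 1) j) := fun i => by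
    rw [chooseMulPow_succ_succ]; ring
  simp only [laguerreSum, sum_range_mul_chooseMulPow_succ, hcoeff, sub_mul, sum_sub_distrib]
  rw [sum_range_succ (fun i => a * _ * _) j, chooseMulPow_eq_zero_of_lt (Nat.lt_succ_self j)]
  simp only [mul_assoc, ← mul_sum]
  ring

end Algebra

theorem discreteLaguerre_eq_laguerreSum (p : ℝ) (j t : ℕ) :
    discreteLaguerre p j t = √(1 - p) * laguerreSum (√p) j t := by
  induction j generalizing t with
  | zero => rw [discreteLaguerre, laguerreSum_zero_left]
  | succ j ihj =>
    induction t with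
    | zero => rw [discreteLaguerre, ihj, laguerreSum_zero_right, laguerreSum_zero_right]; ring
    | succ t iht => rw [discreteLaguerre, ihj, ihj, iht, laguerreSum_succ_succ]; ring

section Analysis

theorem abs_sqrt_lt_one {p : ℝ} (hp : p < 1) : |√p| < 1 := by
  rw [abs_of_nonneg (Real.sqrt_nonneg p), Real.sqrt_lt' one_pos, one_pow]
  exact hp

theorem abs_chooseMulPow (x : ℝ) (k n : ℕ) : |chooseMulPow x k n| = chooseMulPow |x| k n := by
  simp [chooseMulPow, abs_mul, abs_pow]

theorem summable_chooseMulPow {x : ℝ} (hx : |x| < 1) (k : ℕ) : Summable (chooseMulPow x k) := by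
  refine (summable_nat_add_iff k).1 ?_
  simpa [chooseMulPow] using summable_choose_mul_geometric_of_norm_lt_one k (r := x) hx

variable {w : ℕ → ℝ} {C : ℝ}

theorem summable_mul_chooseMulPow (hC : ∀ t, |w t| ≤ C) {b : ℝ} (hb : |b| < 1) (k : ℕ) :
    Summable fun t => w t * chooseMulPow b k t := by
  refine Summable.of_norm_bounded ((summable_chooseMulPow (by rwa [abs_abs]) k).mul_left C)
    fun t => ?_
  rw [Real.norm_eq_abs, abs_mul, abs_chooseMulPow]
  exact mul_le_mul_of_nonneg_right (hC t) (abs_chooseMulPow b k t ▸ abs_nonneg _)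

noncomputable def taylorCoeff (w : ℕ → ℝ) (b : ℝ) (k : ℕ) : ℝ :=
  ∑' t, w t * chooseMulPow b k t

theorem hasSum_taylorCoeff_mul_pow (hC : ∀ t, |w t| ≤ C) {b y : ℝ} (hby : |b| + |y| < 1) :
    HasSum (fun k => taylorCoeff w b k * y ^ k) (∑' t, w t * (b + y) ^ t) := by
  set f : ℕ × ℕ → ℝ := fun q => w q.1 * (chooseMulPow b q.2 q.1 * y ^ q.2)
  have hrow : ∀ t, HasSum (fun k => f (t, k)) (w t * (b + y) ^ t) := fun t =>
    (hasSum_chooseMulPow_mul_pow b y t).mul_left (w t)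
  have habs_row : ∀ t, HasSum (fun k => |f (t, k)|) (|w t| * (|b| + |y|) ^ t) := fun t => by
    simpa only [f, abs_mul, abs_pow, abs_chooseMulPow] using
      (hasSum_chooseMulPow_mul_pow |b| |y| t).mul_left |w t|
  have hf : Summable f := by
    refine Summable.of_abs ((summable_prod_of_nonneg fun _ => abs_nonneg _).2
      ⟨fun t => (habs_row t).summable, ?_⟩)
    simp only [(habs_row _).tsum_eq]
    refine Summable.of_nonneg_of_le (fun t => by positivity) (fun t => ?_)
      ((summable_geometric_of_lt_one (by positivity) hby).mul_left C)
    exact mul_le_mul_of_nonneg_right (hC t) (by positivity)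
  have hcol : ∀ k, HasSum (fun t => f (t, k)) (taylorCoeff w b k * y ^ k) := fun k =>
    (summable_mul_chooseMulPow hC ((le_add_of_nonneg_right (abs_nonneg y)).trans_lt hby)
      k).hasSum.mul_right _ |>.congr_fun fun t => (mul_assoc _ _ _).symm
  have htot : HasSum f (∑' t, w t * (b + y) ^ t) :=
    (hf.hasSum.prod_fiberwise hrow).tsum_eq ▸ hf.hasSum
  exact ((Equiv.prodComm ℕ ℕ).hasSum_iff.2 htot).prod_fiberwise hcol

theorem eq_zero_of_taylorCoeff_eq_zero (hC : ∀ t, |w t| ≤ C) {b : ℝ} (hb : |b| < 1)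
    (h : ∀ k, taylorCoeff w b k = 0) : w = 0 := by
  set P := FormalMultilinearSeries.ofScalars ℝ w
  have hP : ∀ x, P.sum x = ∑' t, w t * x ^ t := fun x =>
    FormalMultilinearSeries.ofScalars_sum_eq w x
  have hradius : 1 ≤ P.radius := by
    simpa using P.le_radius_of_bound C (r := 1) fun n => by
      simpa [P, FormalMultilinearSeries.ofScalars_norm] using hC n
  have hball : Metric.ball (0 : ℝ) 1 ⊆ Metric.eball 0 P.radius := fun x hx =>
    Metric.eball_subset_eball hradius (by simpa [Metric.mem_eball, edist_dist] using hx)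
  have hlocal : P.sum =ᶠ[nhds b] 0 := by
    filter_upwards [Metric.ball_mem_nhds b (sub_pos.2 hb)] with x hx
    rw [Metric.mem_ball, Real.dist_eq] at hx
    have := hasSum_taylorCoeff_mul_pow hC (b := b) (y := x - b) (by linarith)
    simp only [h, zero_mul, add_sub_cancel] at this
    rw [hP, Pi.zero_apply, this.unique hasSum_zero]
  have hzero : P.sum =ᶠ[nhds 0] 0 :=
    Filter.eventuallyEq_of_mem (Metric.ball_mem_nhds 0 one_pos)
      ((P.analyticOnNhd.mono hball).eqOn_zero_of_preconnected_of_eventuallyEq_zero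
        (convex_ball 0 1).isPreconnected (by simpa using hb) hlocal)
  exact (FormalMultilinearSeries.ofScalars_series_eq_zero ℝ).1
    ((P.hasFPowerSeriesOnBall (zero_lt_one.trans_le hradius)).hasFPowerSeriesAt
      |>.eq_zero_of_eventually hzero)

theorem tsum_mul_discreteLaguerre (hC : ∀ t, |w t| ≤ C) {p : ℝ} (hp0 : 0 ≤ p) (hp1 : p < 1)
    (j : ℕ) :
    ∑' t, w t * discreteLaguerre p j t =
      √(1 - p) *
        ∑ i ∈ range (j + 1), (1 - p) ^ i * chooseMulPow (-√p) i j * taylorCoeff w (√p) i := by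
  have hterm : ∀ t, w t * discreteLaguerre p j t = ∑ i ∈ range (j + 1),
      √(1 - p) * ((1 - p) ^ i * chooseMulPow (-√p) i j) * (w t * chooseMulPow (√p) i t) :=
    fun t => by
      rw [discreteLaguerre_eq_laguerreSum, laguerreSum, Real.sq_sqrt hp0, mul_sum, mul_sum]
      exact sum_congr rfl fun i _ => by ring
  rw [tsum_congr hterm, mul_sum, Summable.tsum_finsetSum fun i _ =>
    (summable_mul_chooseMulPow hC (abs_sqrt_lt_one hp1) i).mul_left _]
  exact sum_congr rfl fun i _ => by rw [tsum_mul_left, taylorCoeff]; ring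

theorem taylorCoeff_sqrt_eq_zero_of_orthogonal (hC : ∀ t, |w t| ≤ C) {p : ℝ} (hp0 : 0 ≤ p)
    (hp1 : p < 1) (horth : ∀ j, ∑' t, w t * discreteLaguerre p j t = 0) (k : ℕ) :
    taylorCoeff w (√p) k = 0 := by
  induction k using Nat.strong_induction_on with
  | _ k ih =>
    have h := horth k
    rw [tsum_mul_discreteLaguerre hC hp0 hp1, sum_range_succ,
      sum_eq_zero fun i hi => by rw [ih i (mem_range.1 hi), mul_zero], zero_add,
      chooseMulPow_self, mul_one] at h
    have hp : 0 < 1 - p := sub_pos.2 hp1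
    simpa [(Real.sqrt_pos.2 hp).ne', hp.ne'] using h

end Analysis

/-- Completeness of the discrete Laguerre system in `ℓ²(ℕ, ℝ)`: a square-summable
sequence orthogonal to every `ℓ_j(·; p)` vanishes identically. -/
theorem discreteLaguerre_complete (p : ℝ) (hp0 : 0 < p) (hp1 : p < 1)
    (w : ℕ → ℝ) (hw : Summable fun t => w t ^ 2)
    (horth : ∀ j : ℕ, (∑' t : ℕ, w t * discreteLaguerre p j t) = 0) :
    w = 0 := by
  have hC : ∀ t, |w t| ≤ √(∑' t, w t ^ 2) := fun t =>
    Real.abs_le_sqrt (hw.le_tsum t fun _ _ => sq_nonneg _)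
  exact eq_zero_of_taylorCoeff_eq_zero hC (abs_sqrt_lt_one hp1)
    (taylorCoeff_sqrt_eq_zero_of_orthogonal hC hp0.le hp1 horth)
end

section
/- (Proposition 2.) Let 0 < p < 1, τ ∈ ℕ with τ ≥ 1, let u : ℕ → ℝ be square-summable, and define y : ℕ → ℝ by y(t) = u(t−τ) for t ≥ τ and y(t) = 0 for t < τ. Then y is square-summable and its Laguerre spectrum y_j = Σ_{t=0}^∞ y(t)·ℓ_j(t;p) satisfies, for every j ∈ ℕ, y_j = (1−p)·Σ_{k=0}^{j−1} L^{(τ)}_{j−k}(√p)·u_k + (√p)^τ·u_j, where u_k = Σ_{t=0}^∞ u(t)·ℓ_k(t;p). -/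
/-- The polynomial factor `L_m^{(τ)}(√p)` appearing in the Laguerre-domain
description of the discrete delay:
`L_m^{(τ)}(√p) = (−√p)^{m−τ} · Σ_{n=0}^{τ−1} C(m+n, n)·C(m−1, τ−n−1)·(−p)^n`. -/
noncomputable def delayLaguerrePoly (p : ℝ) (τ m : ℕ) : ℝ :=
  (-Real.sqrt p) ^ ((m : ℤ) - (τ : ℤ)) *
    ∑ n ∈ Finset.range τ,
      ((m + n).choose n : ℝ) * ((m - 1).choose (τ - n - 1) : ℝ) * (-p) ^ n

noncomputable def Ppoly (x : ℝ) (τ μ : ℕ) : ℝ :=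
  ∑ n ∈ Finset.range τ, ((μ + 1 + n).choose n : ℝ) * ((μ).choose (τ - n - 1) : ℝ) * x ^ n

lemma sum_peel (f : ℕ → ℝ) (σ : ℕ) :
    ∑ n ∈ Finset.range (σ+2), f n = f 0 + (∑ n ∈ Finset.range σ, f (n+1)) + f (σ+1) := by
  rw [show σ+2 = (σ+1)+1 by omega, Finset.sum_range_succ, Finset.sum_range_succ' f σ]; ring

lemma sum_peel0 (f : ℕ → ℝ) (σ : ℕ) :
    ∑ n ∈ Finset.range (σ+1), f n = f 0 + (∑ n ∈ Finset.range σ, f (n+1)) := by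
  rw [Finset.sum_range_succ' f σ]; ring

/-- key Pascal step -/
lemma Ppoly_Q (x : ℝ) (τ μ : ℕ) :
    Ppoly x (τ+1) (μ+1) = Ppoly x (τ+1) μ + x * Ppoly x τ (μ+1) + Ppoly x τ μ := by
  cases τ with
  | zero => simp [Ppoly]
  | succ σ =>
    simp only [Ppoly]
    rw [sum_peel (fun n => ((μ + 1 + 1 + n).choose n : ℝ) * ((μ+1).choose (σ + 2 - n - 1) : ℝ) * x ^ n) σ]
    rw [sum_peel (fun n => ((μ + 1 + n).choose n : ℝ) * ((μ).choose (σ + 2 - n - 1) : ℝ) * x ^ n) σ]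
    rw [Finset.sum_range_succ (fun n => ((μ + 1 + 1 + n).choose n : ℝ) * ((μ+1).choose (σ + 1 - n - 1) : ℝ) * x ^ n) σ]
    rw [sum_peel0 (fun n => ((μ + 1 + n).choose n : ℝ) * ((μ).choose (σ + 1 - n - 1) : ℝ) * x ^ n) σ]
    have h0 : ((μ + 1 + 1 + 0).choose 0 : ℝ) * ((μ+1).choose (σ + 2 - 0 - 1) : ℝ) * x ^ 0
        = ((μ + 1 + 0).choose 0 : ℝ) * ((μ).choose (σ + 2 - 0 - 1) : ℝ) * x ^ 0
          + ((μ + 1 + 0).choose 0 : ℝ) * ((μ).choose (σ + 1 - 0 - 1) : ℝ) * x ^ 0 := by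
      simp only [Nat.choose_zero_right, pow_zero, Nat.cast_one, one_mul, mul_one]
      rw [show σ + 2 - 0 - 1 = σ + 1 by omega, show σ + 1 - 0 - 1 = σ by omega]
      rw [Nat.choose_succ_succ (μ) σ]
      push_cast; ring
    have htop : ((μ + 1 + 1 + (σ+1)).choose (σ+1) : ℝ) * ((μ+1).choose (σ + 2 - (σ+1) - 1) : ℝ) * x ^ (σ+1)
        = ((μ + 1 + (σ+1)).choose (σ+1) : ℝ) * ((μ).choose (σ + 2 - (σ+1) - 1) : ℝ) * x ^ (σ+1)
          + x * (((μ + 1 + 1 + σ).choose σ : ℝ) * ((μ+1).choose (σ + 1 - σ - 1) : ℝ) * x ^ σ) := by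
      rw [show σ + 2 - (σ+1) - 1 = 0 by omega, show σ + 1 - σ - 1 = 0 by omega]
      simp only [Nat.choose_zero_right, Nat.cast_one, mul_one]
      rw [show μ + 1 + 1 + (σ+1) = (μ + 1 + 1 + σ) + 1 by omega,
        Nat.choose_succ_succ (μ + 1 + 1 + σ) σ]
      rw [show μ + 1 + 1 + σ = μ + 1 + (σ + 1) by omega]
      push_cast; ring
    have hmid : ∀ n ∈ Finset.range σ,
        ((μ + 1 + 1 + (n+1)).choose (n+1) : ℝ) * ((μ+1).choose (σ + 2 - (n+1) - 1) : ℝ) * x ^ (n+1)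
        = ((μ + 1 + (n+1)).choose (n+1) : ℝ) * ((μ).choose (σ + 2 - (n+1) - 1) : ℝ) * x ^ (n+1)
          + x * (((μ + 1 + 1 + n).choose n : ℝ) * ((μ+1).choose (σ + 1 - n - 1) : ℝ) * x ^ n)
          + ((μ + 1 + (n+1)).choose (n+1) : ℝ) * ((μ).choose (σ + 1 - (n+1) - 1) : ℝ) * x ^ (n+1) := by
      intro n hn
      rw [Finset.mem_range] at hn
      rw [show σ + 2 - (n+1) - 1 = (σ - n - 1) + 1 by omega,
          show σ + 1 - n - 1 = (σ - n - 1) + 1 by omega,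
          show σ + 1 - (n+1) - 1 = σ - n - 1 by omega]
      rw [show μ + 1 + 1 + (n+1) = (μ + 1 + 1 + n) + 1 by omega,
          Nat.choose_succ_succ (μ + 1 + 1 + n) n,
          Nat.choose_succ_succ μ (σ - n - 1)]
      rw [show μ + 1 + 1 + n = μ + 1 + (n + 1) by omega]
      push_cast; ring
    rw [Finset.sum_congr rfl hmid, Finset.sum_add_distrib, Finset.sum_add_distrib, h0, htop]
    simp only [mul_add, Finset.mul_sum]
    ring

lemma Ppoly_mu_zero (x : ℝ) (σ : ℕ) : Ppoly x (σ+1) 0 = (σ+1) * x ^ σ := by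
  rw [Ppoly]
  rw [Finset.sum_eq_single σ]
  · rw [show σ + 1 - σ - 1 = 0 by omega]
    rw [show 0 + 1 + σ = σ + 1 by omega, Nat.choose_succ_self_right]
    simp
  · intro n hn hne
    rw [Finset.mem_range] at hn
    rw [show σ + 1 - n - 1 = (σ - n - 1) + 1 by omega]
    simp [Nat.choose_eq_zero_iff]
  · intro h
    exact absurd (Finset.self_mem_range_succ σ) h

lemma Ppoly_rec (x : ℝ) (τ μ : ℕ) :
    Ppoly x (τ+1) μ = x * Ppoly x τ μ + x ^ τ
      + (1+x) * ∑ r ∈ Finset.range μ, Ppoly x τ r := by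
  induction μ with
  | zero =>
    simp only [Finset.range_zero, Finset.sum_empty, mul_zero, add_zero]
    cases τ with
    | zero => simp [Ppoly]
    | succ σ =>
      rw [Ppoly_mu_zero, Ppoly_mu_zero]
      push_cast; ring
  | succ μ ih =>
    rw [Ppoly_Q, ih, Finset.sum_range_succ]
    ring

lemma DL_eq (p : ℝ) (τ μ : ℕ) :
    delayLaguerrePoly p τ (μ+1)
      = (-Real.sqrt p) ^ ((μ+1 : ℤ) - τ) * Ppoly (-p) τ μ := by
  simp [delayLaguerrePoly, Ppoly]

lemma DL_rec (p : ℝ) (hp0 : 0 < p) (τ μ : ℕ) :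
    delayLaguerrePoly p (τ+1) (μ+1)
      = Real.sqrt p * delayLaguerrePoly p τ (μ+1)
        + Real.sqrt p ^ τ * (-Real.sqrt p) ^ μ
        + (1 - p) * ∑ r ∈ Finset.range μ,
            delayLaguerrePoly p τ (r+1) * (-Real.sqrt p) ^ (μ - r - 1) := by
  have hq : Real.sqrt p * Real.sqrt p = p := Real.mul_self_sqrt hp0.le
  have hqpos : 0 < Real.sqrt p := Real.sqrt_pos.mpr hp0
  have hne : (-Real.sqrt p) ≠ 0 := neg_ne_zero.mpr (ne_of_gt hqpos)
  have h1 : (-Real.sqrt p) ^ ((μ : ℤ) + 1 - ((τ : ℤ) + 1)) = (-Real.sqrt p) ^ ((μ : ℤ) - τ) := by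
    congr 1; ring
  have h2 : (-Real.sqrt p) ^ ((μ : ℤ) + 1 - (τ : ℤ)) = (-Real.sqrt p) ^ ((μ : ℤ) - τ) * (-Real.sqrt p) := by
    rw [← zpow_add_one₀ hne]; congr 1; ring
  have hb : Real.sqrt p ^ τ * (-Real.sqrt p) ^ μ = (-Real.sqrt p) ^ ((μ : ℤ) - τ) * (-p) ^ τ := by
    have h3 : ((-Real.sqrt p) ^ (μ:ℤ) : ℝ) = (-Real.sqrt p) ^ ((μ : ℤ) - τ) * (-Real.sqrt p) ^ (τ:ℤ) := by
      rw [← zpow_add₀ hne]; congr 1; ring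
    rw [← zpow_natCast (-Real.sqrt p) μ, h3, zpow_natCast]
    have h4 : Real.sqrt p ^ τ * (-Real.sqrt p) ^ τ = (-p) ^ τ := by
      rw [← mul_pow]; congr 1; rw [mul_neg, hq]
    calc Real.sqrt p ^ τ * ((-Real.sqrt p) ^ ((μ:ℤ)-τ) * (-Real.sqrt p) ^ τ)
        = (-Real.sqrt p) ^ ((μ:ℤ)-τ) * (Real.sqrt p ^ τ * (-Real.sqrt p) ^ τ) := by ring
      _ = (-Real.sqrt p) ^ ((μ:ℤ)-τ) * (-p) ^ τ := by rw [h4]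
  have hsum : ∀ r ∈ Finset.range μ,
      delayLaguerrePoly p τ (r+1) * (-Real.sqrt p) ^ (μ - r - 1)
        = (-Real.sqrt p) ^ ((μ : ℤ) - τ) * Ppoly (-p) τ r := by
    intro r hr
    rw [Finset.mem_range] at hr
    rw [DL_eq]
    have h5 : ((-Real.sqrt p) ^ (μ - r - 1) : ℝ) = (-Real.sqrt p) ^ ((μ - r - 1 : ℕ) : ℤ) := by
      rw [zpow_natCast]
    rw [h5, mul_comm ((-Real.sqrt p) ^ ((r:ℤ)+1 - τ)) (Ppoly (-p) τ r), mul_assoc, ← zpow_add₀ hne]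
    rw [show ((r:ℤ)+1 - τ + ((μ - r - 1 : ℕ) : ℤ)) = (μ:ℤ) - τ by push_cast; omega]
    ring
  rw [DL_eq, DL_eq, Ppoly_rec, Finset.sum_congr rfl hsum, ← Finset.mul_sum]
  push_cast
  rw [h1, h2, hb]
  linear_combination (((-Real.sqrt p) ^ ((μ:ℤ) - τ)) * Ppoly (-p) τ μ) * hq

theorem dl_rec (p : ℝ) (j t : ℕ) :
    discreteLaguerre p (j+1) (t+1) = Real.sqrt p * discreteLaguerre p (j + 1) t
      + discreteLaguerre p j t - Real.sqrt p * discreteLaguerre p j (t + 1) := by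
  rw [discreteLaguerre]

/-- step lemma -/
theorem dl_step (p : ℝ) (hp0 : 0 ≤ p) (j t : ℕ) :
    discreteLaguerre p j (t+1) = Real.sqrt p * discreteLaguerre p j t
      + (1 - p) * ∑ k ∈ Finset.range j, (-Real.sqrt p) ^ (j - 1 - k) * discreteLaguerre p k t := by
  induction j generalizing t with
  | zero =>
    rw [discreteLaguerre, discreteLaguerre]
    simp [pow_succ]
    ring
  | succ j ih =>
    rw [dl_rec, ih]
    rw [Finset.sum_range_succ]
    have hq : Real.sqrt p * Real.sqrt p = p := Real.mul_self_sqrt hp0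
    have : ∀ k ∈ Finset.range j, (-Real.sqrt p) ^ (j + 1 - 1 - k) * discreteLaguerre p k t
        = (-Real.sqrt p) * ((-Real.sqrt p) ^ (j - 1 - k) * discreteLaguerre p k t) := by
      intro k hk
      rw [Finset.mem_range] at hk
      rw [show j + 1 - 1 - k = (j - 1 - k) + 1 by omega, pow_succ]
      ring
    rw [Finset.sum_congr rfl this, ← Finset.mul_sum]
    simp only [Nat.add_sub_cancel, Nat.sub_self, pow_zero, one_mul]
    linear_combination (- discreteLaguerre p j t) * hq

lemma double_swap (p : ℝ) (τ j t : ℕ) :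
    ∑ k ∈ Finset.range j, ∑ i ∈ Finset.range k,
        delayLaguerrePoly p τ (j-k) * ((-Real.sqrt p) ^ (k - 1 - i) * discreteLaguerre p i t)
      = ∑ k ∈ Finset.range j, ∑ r ∈ Finset.range (j - k - 1),
        delayLaguerrePoly p τ (r+1) * (-Real.sqrt p) ^ (j - k - 1 - r - 1) * discreteLaguerre p k t := by
  rw [← Finset.sum_sigma (Finset.range j) (fun k => Finset.range k)
        (fun x => delayLaguerrePoly p τ (j-x.1) * ((-Real.sqrt p) ^ (x.1 - 1 - x.2) * discreteLaguerre p x.2 t))]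
  rw [← Finset.sum_sigma (Finset.range j) (fun k => Finset.range (j - k - 1))
        (fun x => delayLaguerrePoly p τ (x.2+1) * (-Real.sqrt p) ^ (j - x.1 - 1 - x.2 - 1) * discreteLaguerre p x.1 t)]
  apply Finset.sum_bij' (fun a _ => (⟨a.2, j - a.1 - 1⟩ : Σ _ : ℕ, ℕ))
    (fun b _ => (⟨j - b.2 - 1, b.1⟩ : Σ _ : ℕ, ℕ))
  · rintro ⟨k, i⟩ ha
    simp only [Finset.mem_sigma, Finset.mem_range] at ha ⊢
    exact ⟨by omega, by omega⟩
  · rintro ⟨k, r⟩ hb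
    simp only [Finset.mem_sigma, Finset.mem_range] at hb ⊢
    exact ⟨by omega, by omega⟩
  · rintro ⟨k, i⟩ ha
    simp only [Finset.mem_sigma, Finset.mem_range] at ha
    have : j - (j - k - 1) - 1 = k := by omega
    simp [this]
  · rintro ⟨k, r⟩ hb
    simp only [Finset.mem_sigma, Finset.mem_range] at hb
    have : j - (j - r - 1) - 1 = r := by omega
    simp [this]
  · rintro ⟨k, i⟩ ha
    simp only [Finset.mem_sigma, Finset.mem_range] at ha
    dsimp only
    have h1 : j - k - 1 + 1 = j - k := by omega
    have h2 : j - i - 1 - (j - k - 1) - 1 = k - 1 - i := by omega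
    rw [h1, h2]
    ring

theorem dl_shift (p : ℝ) (hp0 : 0 < p) (hp1 : p < 1) : ∀ (τ j t : ℕ),
    discreteLaguerre p j (t + τ)
      = (1 - p) * ∑ k ∈ Finset.range j, delayLaguerrePoly p τ (j - k) * discreteLaguerre p k t
        + Real.sqrt p ^ τ * discreteLaguerre p j t := by
  intro τ
  induction τ with
  | zero =>
    intro j t
    simp [delayLaguerrePoly]
  | succ τ ih =>
    intro j t
    rw [show t + (τ+1) = (t+1) + τ by omega]
    rw [ih j (t+1)]
    have hA : ∑ k ∈ Finset.range j, delayLaguerrePoly p τ (j - k) * discreteLaguerre p k (t+1)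
        = Real.sqrt p * ∑ k ∈ Finset.range j, delayLaguerrePoly p τ (j - k) * discreteLaguerre p k t
          + (1 - p) * ∑ k ∈ Finset.range j, ∑ i ∈ Finset.range k,
              delayLaguerrePoly p τ (j - k) * ((-Real.sqrt p) ^ (k - 1 - i) * discreteLaguerre p i t) := by
      have hterm : ∀ k ∈ Finset.range j,
          delayLaguerrePoly p τ (j - k) * discreteLaguerre p k (t+1)
            = Real.sqrt p * (delayLaguerrePoly p τ (j - k) * discreteLaguerre p k t)
              + (1 - p) * ∑ i ∈ Finset.range k,
                  delayLaguerrePoly p τ (j - k) * ((-Real.sqrt p) ^ (k - 1 - i) * discreteLaguerre p i t) := by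
        intro k _
        rw [dl_step p hp0.le k t, ← Finset.mul_sum]
        ring
      rw [Finset.sum_congr rfl hterm, Finset.sum_add_distrib, ← Finset.mul_sum, ← Finset.mul_sum]
    have hB : ∑ k ∈ Finset.range j, delayLaguerrePoly p (τ+1) (j - k) * discreteLaguerre p k t
        = Real.sqrt p * ∑ k ∈ Finset.range j, delayLaguerrePoly p τ (j - k) * discreteLaguerre p k t
          + Real.sqrt p ^ τ * ∑ k ∈ Finset.range j, (-Real.sqrt p) ^ (j - 1 - k) * discreteLaguerre p k t
          + (1 - p) * ∑ k ∈ Finset.range j, ∑ r ∈ Finset.range (j - k - 1),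
              delayLaguerrePoly p τ (r+1) * (-Real.sqrt p) ^ (j - k - 1 - r - 1) * discreteLaguerre p k t := by
      have hterm : ∀ k ∈ Finset.range j,
          delayLaguerrePoly p (τ+1) (j - k) * discreteLaguerre p k t
            = Real.sqrt p * (delayLaguerrePoly p τ (j - k) * discreteLaguerre p k t)
              + Real.sqrt p ^ τ * ((-Real.sqrt p) ^ (j - 1 - k) * discreteLaguerre p k t)
              + (1 - p) * ∑ r ∈ Finset.range (j - k - 1),
                  delayLaguerrePoly p τ (r+1) * (-Real.sqrt p) ^ (j - k - 1 - r - 1) * discreteLaguerre p k t := by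
        intro k hk
        rw [Finset.mem_range] at hk
        have h := DL_rec p hp0 τ (j - k - 1)
        rw [show (j - k - 1) + 1 = j - k by omega] at h
        rw [h, show j - 1 - k = j - k - 1 by omega, ← Finset.sum_mul]
        ring
      rw [Finset.sum_congr rfl hterm, Finset.sum_add_distrib, Finset.sum_add_distrib,
        ← Finset.mul_sum, ← Finset.mul_sum, ← Finset.mul_sum]
    rw [hA, hB, dl_step p hp0.le j t, double_swap p τ j t]
    ring

lemma dl_bound (p : ℝ) (hp0 : 0 < p) (hp1 : p < 1) (j : ℕ) :
    ∃ B : ℝ, 0 ≤ B ∧ ∀ t : ℕ, |discreteLaguerre p j t| ≤ B * ((Real.sqrt p + 1)/2) ^ t := by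
  have hq0 : 0 < Real.sqrt p := Real.sqrt_pos.mpr hp0
  have hq1 : Real.sqrt p < 1 := by
    rw [show (1:ℝ) = Real.sqrt 1 by simp]
    exact Real.sqrt_lt_sqrt hp0.le hp1
  set q := Real.sqrt p with hqdef
  set ρ := (q + 1)/2 with hρdef
  have hρ0 : 0 < ρ := by rw [hρdef]; linarith
  have hqρ : q < ρ := by rw [hρdef]; linarith
  have hρ1 : ρ < 1 := by rw [hρdef]; linarith
  induction j with
  | zero =>
    refine ⟨|Real.sqrt (1 - p)|, abs_nonneg _, fun t => ?_⟩
    have hval : discreteLaguerre p 0 t = Real.sqrt (1-p) * q ^ t := by rw [discreteLaguerre]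
    rw [hval, abs_mul, abs_pow, abs_of_nonneg hq0.le]
    have : q ^ t ≤ ρ ^ t := pow_le_pow_left₀ hq0.le hqρ.le t
    have h2 : (0:ℝ) ≤ |Real.sqrt (1-p)| := abs_nonneg _
    nlinarith [pow_nonneg hq0.le t]
  | succ j ih =>
    obtain ⟨B, hB0, hB⟩ := ih
    set c := |discreteLaguerre p (j+1) 0| with hcdef
    have hd : 0 < 1 - q/ρ := by
      rw [sub_pos, div_lt_one hρ0]; exact hqρ
    set B' := (B * (1/ρ + q) + c) / (1 - q/ρ) with hB'def
    have hc0 : 0 ≤ c := abs_nonneg _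
    have hB'0 : 0 ≤ B' := by
      apply div_nonneg _ hd.le
      have : 0 ≤ B * (1/ρ + q) := by positivity
      linarith
    have hkey : B' * (1 - q/ρ) = B * (1/ρ + q) + c := by
      rw [hB'def, div_mul_cancel₀ _ (ne_of_gt hd)]
    refine ⟨B', hB'0, fun t => ?_⟩
    induction t with
    | zero =>
      rw [pow_zero, mul_one]
      have h1 : 1 - q/ρ ≤ 1 := by
        have : 0 ≤ q/ρ := by positivity
        linarith
      have h2 : 0 ≤ B * (1/ρ + q) := by positivity
      nlinarith
    | succ t iht =>
      rw [dl_rec]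
      calc |q * discreteLaguerre p (j+1) t + discreteLaguerre p j t
              - q * discreteLaguerre p j (t+1)|
          ≤ |q * discreteLaguerre p (j+1) t + discreteLaguerre p j t|
              + |q * discreteLaguerre p j (t+1)| := abs_sub _ _
        _ ≤ |q * discreteLaguerre p (j+1) t| + |discreteLaguerre p j t|
              + |q * discreteLaguerre p j (t+1)| := by
            have := abs_add_le (q * discreteLaguerre p (j+1) t) (discreteLaguerre p j t)
            linarith
        _ = q * |discreteLaguerre p (j+1) t| + |discreteLaguerre p j t|
              + q * |discreteLaguerre p j (t+1)| := by
            rw [abs_mul, abs_mul, abs_of_nonneg hq0.le]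
        _ ≤ q * (B' * ρ ^ t) + B * ρ ^ t + q * (B * ρ ^ (t+1)) := by
            have h1 := hB t
            have h2 := hB (t+1)
            nlinarith
        _ ≤ B' * ρ ^ (t+1) := by
            have hρt : (0:ℝ) ≤ ρ ^ t := pow_nonneg hρ0.le t
            have hmul : B' * ρ - q * B' ≥ B + q * B * ρ := by
              have := hkey
              have hρne : ρ ≠ 0 := ne_of_gt hρ0
              have expand : B' * ρ - q * B' = (B' * (1 - q/ρ)) * ρ := by
                field_simp
              rw [expand, hkey]
              have : (B * (1/ρ + q) + c) * ρ = B + q * B * ρ + c * ρ := by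
                field_simp
              rw [this]
              nlinarith
            have hsp : ρ ^ (t+1) = ρ * ρ ^ t := by ring
            have h9 := mul_le_mul_of_nonneg_right hmul.le hρt
            rw [hsp]
            nlinarith [h9]

lemma dl_sq_summable (p : ℝ) (hp0 : 0 < p) (hp1 : p < 1) (j : ℕ) :
    Summable (fun t => (discreteLaguerre p j t) ^ 2) := by
  obtain ⟨B, hB0, hB⟩ := dl_bound p hp0 hp1 j
  have hq0 : 0 < Real.sqrt p := Real.sqrt_pos.mpr hp0
  have hq1 : Real.sqrt p < 1 := by
    rw [show (1:ℝ) = Real.sqrt 1 by simp]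
    exact Real.sqrt_lt_sqrt hp0.le hp1
  set ρ := (Real.sqrt p + 1)/2 with hρdef
  have hρ0 : 0 < ρ := by rw [hρdef]; linarith
  have hρ1 : ρ < 1 := by rw [hρdef]; linarith
  have hgeo : Summable (fun t : ℕ => B^2 * (ρ^2) ^ t) :=
    (summable_geometric_of_lt_one (by positivity) (by nlinarith)).mul_left _
  apply Summable.of_nonneg_of_le (fun t => sq_nonneg _) _ hgeo
  intro t
  have h1 := hB t
  have h2 : (discreteLaguerre p j t)^2 = |discreteLaguerre p j t|^2 := (sq_abs _).symm
  have h3 : (ρ^2)^t = (ρ^t)^2 := by rw [← pow_mul, ← pow_mul, Nat.mul_comm]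
  rw [h2, h3]
  nlinarith [abs_nonneg (discreteLaguerre p j t), pow_nonneg hρ0.le t]

lemma sq_mul_summable {g f : ℕ → ℝ} (hg : Summable (fun t => g t ^ 2))
    (hf : Summable (fun t => f t ^ 2)) : Summable (fun t => g t * f t) := by
  have hbound : Summable (fun t => (g t ^ 2 + f t ^ 2)/2) := (hg.add hf).div_const 2
  have habs : Summable (fun t => |g t * f t|) := by
    refine Summable.of_nonneg_of_le (fun t => abs_nonneg _) (fun t => ?_) hbound
    rw [abs_mul]
    nlinarith [two_mul_le_add_sq |g t| |f t|, sq_abs (g t), sq_abs (f t),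
      abs_nonneg (g t), abs_nonneg (f t)]
  exact habs.of_abs


/-- Proposition 2: Laguerre spectrum of the pure discrete delay `y(t) = u(t − τ)`. -/
theorem delay_laguerre_spectrum (p : ℝ) (hp0 : 0 < p) (hp1 : p < 1)
    (τ : ℕ) (hτ : 1 ≤ τ) (u : ℕ → ℝ) (hu : Summable fun t => u t ^ 2)
    (y : ℕ → ℝ) (hy : ∀ t : ℕ, y t = if t < τ then 0 else u (t - τ)) :
    Summable (fun t => y t ^ 2) ∧
      ∀ j : ℕ,
        (∑' t : ℕ, y t * discreteLaguerre p j t) =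
          (1 - p) * (∑ k ∈ Finset.range j,
              delayLaguerrePoly p τ (j - k) * ∑' t : ℕ, u t * discreteLaguerre p k t) +
            Real.sqrt p ^ τ * ∑' t : ℕ, u t * discreteLaguerre p j t := by
  have hy2 : Summable (fun t => y t ^ 2) := by
    apply (summable_nat_add_iff τ).mp
    have he : (fun n => y (n + τ) ^ 2) = fun n => u n ^ 2 := by
      funext n
      rw [hy (n + τ), if_neg (by omega), Nat.add_sub_cancel]
    rw [he]
    exact hu
  refine ⟨hy2, fun j => ?_⟩
  have hul : ∀ k : ℕ, Summable (fun t => u t * discreteLaguerre p k t) :=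
    fun k => sq_mul_summable hu (dl_sq_summable p hp0 hp1 k)
  have hyl : Summable (fun t => y t * discreteLaguerre p j t) :=
    sq_mul_summable hy2 (dl_sq_summable p hp0 hp1 j)
  have step1 : (∑' t : ℕ, y t * discreteLaguerre p j t)
      = ∑' t : ℕ, u t * discreteLaguerre p j (t + τ) := by
    rw [← Summable.sum_add_tsum_nat_add τ hyl]
    have hz : ∑ i ∈ Finset.range τ, y i * discreteLaguerre p j i = 0 := by
      apply Finset.sum_eq_zero
      intro i hi
      rw [Finset.mem_range] at hi
      rw [hy i, if_pos hi, zero_mul]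
    rw [hz, zero_add]
    apply tsum_congr
    intro t
    rw [hy (t + τ), if_neg (by omega), Nat.add_sub_cancel]
  rw [step1]
  have hpt : ∀ t : ℕ, u t * discreteLaguerre p j (t + τ)
      = (∑ k ∈ Finset.range j,
          (1 - p) * delayLaguerrePoly p τ (j - k) * (u t * discreteLaguerre p k t))
        + Real.sqrt p ^ τ * (u t * discreteLaguerre p j t) := by
    intro t
    rw [dl_shift p hp0 hp1 τ j t, mul_add, Finset.mul_sum, Finset.mul_sum]
    congr 1
    · apply Finset.sum_congr rfl
      intro k _
      ring
    · ring
  rw [tsum_congr hpt]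
  have hsumF : ∀ k ∈ Finset.range j, Summable (fun t =>
      (1 - p) * delayLaguerrePoly p τ (j - k) * (u t * discreteLaguerre p k t)) :=
    fun k _ => (hul k).mul_left _
  have hF : Summable (fun t => ∑ k ∈ Finset.range j,
      (1 - p) * delayLaguerrePoly p τ (j - k) * (u t * discreteLaguerre p k t)) :=
    summable_sum hsumF
  have hG : Summable (fun t => Real.sqrt p ^ τ * (u t * discreteLaguerre p j t)) :=
    (hul j).mul_left _
  rw [Summable.tsum_add hF hG, Summable.tsum_finsetSum hsumF, tsum_mul_left, Finset.mul_sum]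
  congr 1
  apply Finset.sum_congr rfl
  intro k _
  rw [tsum_mul_left]
  ring
end

section
/- Let 0 < p < 1 and τ ∈ ℕ with τ ≥ 1. For the τ-dimensional shift realization of the delay, with F_τ = (I − √p·A_τ)^{-1}(A_τ − √p·I), G_τ = (1−p)·(I − √p·A_τ)^{-1}B_τ, and H_τ = C_τ·(I − √p·A_τ)^{-1}, it holds for every j ≥ 1 that (1−p)·L^{(τ)}_j(√p) = H_τ·F_τ^{j−1}·G_τ. -/
/-!
Lower-triangular Toeplitz matrices are a truncation of power series: `φ ↦ (coeff (i - j) φ)ᵢⱼ`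
is an algebra map `R⟦X⟧ → Matrix (Fin τ) (Fin τ) R` sending `X` to the shift `A_τ`. Hence
`(1 - √p A_τ)⁻¹` and `F_τ` are the images of `(1 - √p X)⁻¹` and `(X - √p) / (1 - √p X)`, and since
`C_τ M B_τ` reads off the `(τ - 1, 0)` entry of `M`, the Markov parameter `H_τ F_τ^{j-1} G_τ` is
`(1 - p)` times the coefficient of `X^(τ-1)` in `(1 - √p X)^{-(j+1)} (X - √p)^{j-1}`. Expanding both
factors binomially gives `L_j^{(τ)}(√p)`.
-/

open PowerSeries Finset

namespace PowerSeries

section CommSemiring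

variable {R : Type*} [CommSemiring R] (n : ℕ)

noncomputable def toeplitz : R⟦X⟧ →ₐ[R] Matrix (Fin n) (Fin n) R where
  toFun φ := Matrix.of fun i j => if j ≤ i then coeff ((i : ℕ) - j) φ else 0
  map_one' := by
    ext i j
    simp only [coeff_one, Matrix.of_apply, Matrix.one_apply, Fin.ext_iff, Fin.le_def]
    split_ifs <;> first | rfl | (exfalso; omega)
  map_mul' φ ψ := by
    ext i k
    simp only [Matrix.of_apply, Matrix.mul_apply, ite_zero_mul_ite_zero]
    rw [← Finset.sum_filter]
    split_ifs with hki
    · -- `j ↦ (i - j, j - k)` matches the terms `k ≤ j ≤ i` of the product with the antidiagonal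
      rw [coeff_mul]
      refine Finset.sum_bij' (fun ab _ => ⟨k + ab.2, ?_⟩) (fun j _ => ((i : ℕ) - j, (j : ℕ) - k))
        ?_ ?_ ?_ ?_ ?_ <;>
        simp only [HasAntidiagonal.mem_antidiagonal, mem_filter, mem_univ, true_and, Fin.le_def,
          Prod.forall, Fin.ext_iff, Prod.ext_iff] at *
      all_goals try intros; omega
      intro a b hab
      rw [show (i : ℕ) - (k + b) = a by omega, Nat.add_sub_cancel_left]
    · refine (Finset.sum_eq_zero fun j hj => ?_).symm
      simp only [mem_filter, Fin.le_def] at hj hki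
      omega
  map_zero' := by ext; simp
  map_add' φ ψ := by ext; simp only [map_add, Matrix.of_apply, Matrix.add_apply]; split_ifs <;> simp
  commutes' r := by
    ext i j
    simp only [algebraMap_apply, coeff_C, Matrix.of_apply, Matrix.algebraMap_matrix_apply,
      Fin.ext_iff, Fin.le_def, Algebra.algebraMap_self, RingHom.id_apply]
    split_ifs <;> first | rfl | (exfalso; omega)

variable {n}

theorem toeplitz_apply (φ : R⟦X⟧) (i j : Fin n) :
    toeplitz n φ i j = if j ≤ i then coeff ((i : ℕ) - j) φ else 0 :=
  rfl

theorem toeplitz_X (i j : Fin n) :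
    toeplitz n (X : R⟦X⟧) i j = if (i : ℕ) = j + 1 then 1 else 0 := by
  simp only [toeplitz_apply, coeff_X, Fin.le_def]
  split_ifs <;> first | rfl | omega

end CommSemiring

section CommRing

variable {R : Type*} [CommRing R] {n : ℕ}

theorem toeplitz_X_sub_C (s : R) : toeplitz n (X - C s) = toeplitz n X - s • 1 := by
  rw [map_sub, ← Algebra.algebraMap_eq_smul_one, ← AlgHom.commutes (toeplitz n), algebraMap_apply,
    Algebra.algebraMap_self, RingHom.id_apply]

theorem inv_one_sub_smul_toeplitz_X (s : R) :
    (1 - s • toeplitz n (X : R⟦X⟧))⁻¹ = toeplitz n (rescale s (mk 1)) := by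
  refine Matrix.inv_eq_right_inv ?_
  rw [← map_smul, ← map_one (toeplitz n), ← map_sub, ← map_mul, smul_eq_C_mul, ← rescale_X,
    ← map_one (rescale s), ← map_sub, ← map_mul, mul_comm, mk_one_mul_one_sub_eq_one, map_one,
    map_one]

theorem coeff_rescale_mk_one_pow (s : R) (d k : ℕ) :
    coeff k (rescale s (mk 1) ^ (d + 1)) = s ^ k * (d + k).choose d := by
  rw [← map_pow, mk_one_pow_eq_mk_choose_add, coeff_rescale, coeff_mk]

theorem coeff_X_sub_C_pow (s : R) (r k : ℕ) :
    coeff k ((X - C s) ^ r) = (-s) ^ (r - k) * r.choose k := by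
  rw [← Polynomial.coeff_X_add_C_pow, sub_eq_add_neg, ← map_neg, ← Polynomial.coe_X,
    ← Polynomial.coe_C, ← Polynomial.coe_add, ← Polynomial.coe_pow, Polynomial.coeff_coe]

end CommRing

end PowerSeries

theorem delayLaguerrePoly_succ_eq_coeff {p : ℝ} (hp : 0 < p) {τ : ℕ} (hτ : 1 ≤ τ) (r : ℕ) :
    delayLaguerrePoly p τ (r + 1) =
      coeff (τ - 1) (rescale √p (mk 1) ^ (r + 2) * (X - C √p) ^ r) := by
  have hs : √p ≠ 0 := (Real.sqrt_pos.mpr hp).ne'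
  rw [coeff_mul, Finset.Nat.sum_antidiagonal_eq_sum_range_succ_mk, Nat.succ_eq_add_one,
    Nat.sub_add_cancel hτ, delayLaguerrePoly, mul_sum]
  refine sum_congr rfl fun n hn => ?_
  rw [mem_range] at hn
  rw [coeff_rescale_mk_one_pow, coeff_X_sub_C_pow, Nat.add_sub_cancel, Nat.choose_symm_add,
    Nat.sub_right_comm]
  obtain hle | hlt := le_or_gt (τ - 1 - n) r
  · have hexp : (-√p) ^ (r - (τ - 1 - n)) = (-√p) ^ ((r + 1 : ℕ) - (τ : ℤ)) * (-√p) ^ n := by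
      rw [← zpow_natCast, ← zpow_natCast, ← zpow_add₀ (neg_ne_zero.mpr hs)]
      congr 1
      omega
    rw [hexp, show -p = -√p * √p by rw [neg_mul, Real.mul_self_sqrt hp.le], mul_pow]
    ring
  · simp [Nat.choose_eq_zero_of_lt hlt]

theorem delay_markov_parameters_general (p : ℝ) (hp0 : 0 < p) (τ : ℕ) (hτ : 1 ≤ τ)
    (A : Matrix (Fin τ) (Fin τ) ℝ) (B : Matrix (Fin τ) (Fin 1) ℝ)
    (C : Matrix (Fin 1) (Fin τ) ℝ)
    (hA : ∀ i j : Fin τ, A i j = if (i : ℕ) = (j : ℕ) + 1 then 1 else 0)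
    (hB : ∀ i : Fin τ, B i 0 = if (i : ℕ) = 0 then 1 else 0)
    (hC : ∀ j : Fin τ, C 0 j = if (j : ℕ) = τ - 1 then 1 else 0)
    (F : Matrix (Fin τ) (Fin τ) ℝ) (G : Matrix (Fin τ) (Fin 1) ℝ)
    (H : Matrix (Fin 1) (Fin τ) ℝ)
    (hF : F = (1 - Real.sqrt p • A)⁻¹ * (A - Real.sqrt p • 1))
    (hG : G = (1 - p) • ((1 - Real.sqrt p • A)⁻¹ * B))
    (hH : H = C * (1 - Real.sqrt p • A)⁻¹) :
    ∀ j : ℕ, 1 ≤ j →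
      (1 - p) * delayLaguerrePoly p τ j = (H * F ^ (j - 1) * G) 0 0 := by
  intro j hj
  obtain ⟨r, rfl⟩ := Nat.exists_eq_add_of_le' hj
  set s := √p
  have hA' : A = toeplitz τ X := Matrix.ext fun i j => by rw [hA, toeplitz_X]
  have hB' : B = Matrix.single ⟨0, hτ⟩ 0 1 := Matrix.ext fun i k => by
    rw [Subsingleton.elim k 0, hB, Matrix.single_apply]
    simp [Fin.ext_iff, eq_comm]
  have hC' : C = Matrix.single 0 ⟨τ - 1, by omega⟩ 1 := Matrix.ext fun k j => by
    rw [Subsingleton.elim k 0, hC, Matrix.single_apply]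
    simp [Fin.ext_iff, eq_comm]
  have hmarkov : H * F ^ r * G = (1 - p) •
      (C * toeplitz τ (rescale s (mk 1) ^ (r + 2) * (X - PowerSeries.C s) ^ r) * B) := by
    rw [hH, hF, hG, hA', inv_one_sub_smul_toeplitz_X, ← toeplitz_X_sub_C, ← map_mul, ← map_pow]
    simp only [Matrix.mul_smul, ← Matrix.mul_assoc]
    simp only [Matrix.mul_assoc C, ← map_mul]
    congr 4
    rw [mul_pow]
    ring
  rw [Nat.add_sub_cancel, hmarkov, hC', hB', Matrix.smul_apply, Matrix.single_mul_mul_single,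
    delayLaguerrePoly_succ_eq_coeff hp0 hτ, toeplitz_apply]
  simp [s]

/-- The Markov parameters of the Laguerre-domain realization of the `τ`-step delay
are `(1−p)·L_j^{(τ)}(√p) = H_τ F_τ^{j−1} G_τ` for `j ≥ 1`. -/
theorem delay_markov_parameters (p : ℝ) (hp0 : 0 < p) (hp1 : p < 1) (τ : ℕ) (hτ : 1 ≤ τ)
    (A : Matrix (Fin τ) (Fin τ) ℝ) (B : Matrix (Fin τ) (Fin 1) ℝ)
    (C : Matrix (Fin 1) (Fin τ) ℝ)
    (hA : ∀ i j : Fin τ, A i j = if (i : ℕ) = (j : ℕ) + 1 then 1 else 0)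
    (hB : ∀ i : Fin τ, B i 0 = if (i : ℕ) = 0 then 1 else 0)
    (hC : ∀ j : Fin τ, C 0 j = if (j : ℕ) = τ - 1 then 1 else 0)
    (F : Matrix (Fin τ) (Fin τ) ℝ) (G : Matrix (Fin τ) (Fin 1) ℝ)
    (H : Matrix (Fin 1) (Fin τ) ℝ)
    (hF : F = (1 - Real.sqrt p • A)⁻¹ * (A - Real.sqrt p • 1))
    (hG : G = (1 - p) • ((1 - Real.sqrt p • A)⁻¹ * B))
    (hH : H = C * (1 - Real.sqrt p • A)⁻¹) :
    ∀ j : ℕ, 1 ≤ j →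
      (1 - p) * delayLaguerrePoly p τ j = (H * F ^ (j - 1) * G) 0 0 :=
  delay_markov_parameters_general p hp0 τ hτ A B C hA hB hC F G H hF hG hH
end

section
/- (Proposition 3.) Fix 0 < p < 1 and L ∈ ℕ. For T ≥ L let Φ_{L,T}(p) ∈ ℝ^{T×L} have entries [Φ_{L,T}(p)]_{t,k} = ℓ_k(t;p) for t = 0,…,T−1, k = 0,…,L−1, and suppose Φ_{L,T}(p)^T·Φ_{L,T}(p) is invertible with Ψ_p = (Φ_{L,T}(p)^T·Φ_{L,T}(p))^{-1}·Φ_{L,T}(p)^T. If e(0),…,e(T−1) are zero-mean random variables with E[e(s)·e(t)] = λ·δ_{st} (λ > 0), then the covariance matrix of E_lag = Ψ_p·(e(0),…,e(T−1))^T equals λ·(Φ_{L,T}(p)^T·Φ_{L,T}(p))^{-1}; moreover Φ_{L,T}(p)^T·Φ_{L,T}(p) → I_L as T → ∞, hence this covariance matrix converges to λ·I_L, i.e., for every ε > 0 there exists T₀ such that for all T ≥ T₀, ‖λ·Ψ_p·Ψ_p^T − λ·I_L‖ < ε. -/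
open MeasureTheory Matrix

/-- The `T × L` matrix whose `(t,k)` entry is `ℓ_k(t; p)`. -/
noncomputable def laguerreMatrix (p : ℝ) (T L : ℕ) : Matrix (Fin T) (Fin L) ℝ :=
  Matrix.of fun t k => discreteLaguerre p (k : ℕ) (t : ℕ)

/-!
The covariance of `Ψ e` is `λ Ψ Ψᵀ`, and `Ψ Ψᵀ = (ΦᵀΦ)⁻¹` for `Ψ = (ΦᵀΦ)⁻¹ Φᵀ` (when `ΦᵀΦ` is
singular both sides are `0`).

For the limit write `q = √p` and `ℓ_{-1} = 0`. The recursion says that `ℓ_j` is the all-pass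
filter `(1 - q z) / (z - q)` applied to `ℓ_{j-1}`, and the energy balance of that filter over
`t < T` reads
`(1 - p) (∑ ℓ_j ℓ_k - ∑ ℓ_{j-1} ℓ_{k-1}) = [j = k = 0] (1 - p) - B_j(T) B_k(T)`
with boundary terms `B_j(T) = ℓ_j(T) + q ℓ_{j-1}(T)`. For `j = k` it bounds the energy of every
`ℓ_j` by `1`, so `ℓ_j(T) → 0` and the boundary terms vanish; induction on `j` then gives
`ΦᵀΦ → I`, and the matrix inverse is continuous at `I`.
-/

open Filter Topology Finset

theorem one_sub_sq_mul_sum_range_mul_sub (q : ℝ) {a b a' b' : ℕ → ℝ}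
    (h : ∀ t, a (t + 1) - q * a t = b t - q * b (t + 1))
    (h' : ∀ t, a' (t + 1) - q * a' t = b' t - q * b' (t + 1)) (T : ℕ) :
    (1 - q ^ 2) * (∑ t ∈ range T, a t * a' t - ∑ t ∈ range T, b t * b' t) =
      (a 0 + q * b 0) * (a' 0 + q * b' 0) - (a T + q * b T) * (a' T + q * b' T) := by
  induction T with
  | zero => simp
  | succ T ih =>
    simp only [sum_range_succ]
    linear_combination ih + (a' (T + 1) + q * b' (T + 1)) * h T + (q * a T + b T) * h' T

theorem Matrix.inv_transpose_mul_self_mul_transpose_mul_transpose {m n R : Type*} [Fintype m]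
    [Fintype n] [DecidableEq n] [CommRing R] (Φ : Matrix m n R) :
    (Φᵀ * Φ)⁻¹ * Φᵀ * ((Φᵀ * Φ)⁻¹ * Φᵀ)ᵀ = (Φᵀ * Φ)⁻¹ := by
  by_cases h : IsUnit (Φᵀ * Φ).det
  · rw [transpose_mul, transpose_transpose, transpose_nonsing_inv, transpose_mul,
      transpose_transpose, Matrix.mul_assoc, ← Matrix.mul_assoc Φᵀ, mul_nonsing_inv _ h,
      Matrix.mul_one]
  · simp [nonsing_inv_apply_not_isUnit _ h]

theorem integral_sum_mul_sum_of_white_noise {Ω ι κ : Type*} [MeasurableSpace Ω]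
    {μ : Measure Ω} [Fintype κ] [DecidableEq κ] (Ψ : Matrix ι κ ℝ) {e : κ → Ω → ℝ} {lam : ℝ}
    (hint : ∀ s t, Integrable (fun ω => e s ω * e t ω) μ)
    (hcov : ∀ s t, ∫ ω, e s ω * e t ω ∂μ = if s = t then lam else 0) (k l : ι) :
    ∫ ω, (∑ t, Ψ k t * e t ω) * (∑ t, Ψ l t * e t ω) ∂μ = lam * (Ψ * Ψᵀ) k l := by
  calc ∫ ω, (∑ t, Ψ k t * e t ω) * (∑ t, Ψ l t * e t ω) ∂μ
      = ∫ ω, ∑ s, ∑ t, Ψ k s * Ψ l t * (e s ω * e t ω) ∂μ := by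
        simp only [sum_mul_sum]
        congr! 4 with ω s _ t
        ring
    _ = ∑ s, ∑ t, Ψ k s * Ψ l t * ∫ ω, e s ω * e t ω ∂μ := by
        rw [integral_finsetSum _ fun s _ => integrable_finsetSum _ fun t _ =>
          (hint s t).const_mul _]
        simp only [integral_finsetSum _ fun t _ => (hint _ t).const_mul _, integral_const_mul]
    _ = lam * (Ψ * Ψᵀ) k l := by
        simp [hcov, mul_apply, mul_sum, mul_comm]

theorem Filter.Tendsto.eventually_forall_abs_sub_apply_lt {α m n : Type*} [Finite m]
    [Finite n] {l : Filter α} {f : α → Matrix m n ℝ} {M : Matrix m n ℝ}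
    (h : Tendsto f l (𝓝 M)) {ε : ℝ} (hε : 0 < ε) :
    ∀ᶠ a in l, ∀ i j, |(f a - M) i j| < ε := by
  refine eventually_all.2 fun i => eventually_all.2 fun j => ?_
  have hij := tendsto_pi_nhds.1 (tendsto_pi_nhds.1 h i) j
  simpa only [Matrix.sub_apply, Real.dist_eq] using Metric.tendsto_nhds.1 hij ε hε

/-- `ℓ_{j-1}(t; p)`, with `ℓ_{-1} = 0`. -/
noncomputable def discreteLaguerrePred (p : ℝ) : ℕ → ℕ → ℝ
  | 0, _ => 0
  | j + 1, t => discreteLaguerre p j t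

theorem discreteLaguerre_zero (p : ℝ) (t : ℕ) :
    discreteLaguerre p 0 t = √(1 - p) * √p ^ t := by
  rw [discreteLaguerre]

theorem discreteLaguerre_succ_sub (p : ℝ) (j t : ℕ) :
    discreteLaguerre p j (t + 1) - √p * discreteLaguerre p j t =
      discreteLaguerrePred p j t - √p * discreteLaguerrePred p j (t + 1) := by
  cases j with
  | zero => simp only [discreteLaguerre_zero, discreteLaguerrePred]; ring
  | succ j => rw [discreteLaguerre, discreteLaguerrePred, discreteLaguerrePred]; ring

theorem discreteLaguerre_zero_add_pred (p : ℝ) (j : ℕ) :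
    discreteLaguerre p j 0 + √p * discreteLaguerrePred p j 0 =
      if j = 0 then √(1 - p) else 0 := by
  cases j with
  | zero => simp [discreteLaguerre_zero, discreteLaguerrePred]
  | succ j => rw [discreteLaguerre, discreteLaguerrePred]; simp

theorem laguerreMatrix_transpose_mul_self_apply (p : ℝ) (T L : ℕ) (k l : Fin L) :
    ((laguerreMatrix p T L)ᵀ * laguerreMatrix p T L) k l =
      ∑ t ∈ range T, discreteLaguerre p k t * discreteLaguerre p l t :=
  Fin.sum_univ_eq_sum_range (fun t => discreteLaguerre p k t * discreteLaguerre p l t) T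

section Limits

variable {p : ℝ}

theorem one_sub_mul_sum_range_discreteLaguerre_mul_sub (hp0 : 0 ≤ p) (hp1 : p ≤ 1)
    (j k T : ℕ) :
    (1 - p) * (∑ t ∈ range T, discreteLaguerre p j t * discreteLaguerre p k t -
        ∑ t ∈ range T, discreteLaguerrePred p j t * discreteLaguerrePred p k t) =
      (if j = 0 ∧ k = 0 then 1 - p else 0) -
        (discreteLaguerre p j T + √p * discreteLaguerrePred p j T) *
          (discreteLaguerre p k T + √p * discreteLaguerrePred p k T) := by
  have hinit : (if j = 0 ∧ k = 0 then 1 - p else 0) =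
      (if j = 0 then √(1 - p) else 0) * (if k = 0 then √(1 - p) else 0) := by
    split_ifs <;> simp_all [Real.mul_self_sqrt (sub_nonneg.2 hp1)]
  rw [hinit, ← discreteLaguerre_zero_add_pred, ← discreteLaguerre_zero_add_pred]
  simpa only [Real.sq_sqrt hp0] using one_sub_sq_mul_sum_range_mul_sub _
    (discreteLaguerre_succ_sub p j) (discreteLaguerre_succ_sub p k) T

theorem sum_range_discreteLaguerre_sq_le_one (hp0 : 0 ≤ p) (hp1 : p < 1) (j T : ℕ) :
    ∑ t ∈ range T, discreteLaguerre p j t ^ 2 ≤ 1 := by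
  have hp : 0 < 1 - p := sub_pos.2 hp1
  induction j with
  | zero =>
    have key := one_sub_mul_sum_range_discreteLaguerre_mul_sub hp0 hp1.le 0 0 T
    simp only [discreteLaguerrePred, mul_zero, sum_const_zero, sub_zero, add_zero, and_self,
      if_true] at key
    simp only [sq]
    nlinarith [mul_self_nonneg (discreteLaguerre p 0 T)]
  | succ j ih =>
    have key := one_sub_mul_sum_range_discreteLaguerre_mul_sub hp0 hp1.le (j + 1) (j + 1) T
    simp only [discreteLaguerrePred, add_eq_zero, one_ne_zero, and_false, and_self,
      if_false, zero_sub] at key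
    simp only [sq] at ih ⊢
    nlinarith [mul_self_nonneg (discreteLaguerre p (j + 1) T + √p * discreteLaguerre p j T)]

theorem tendsto_discreteLaguerre_atTop (hp0 : 0 ≤ p) (hp1 : p < 1) (j : ℕ) :
    Tendsto (discreteLaguerre p j) atTop (𝓝 0) := by
  have hsummable : Summable fun t => discreteLaguerre p j t ^ 2 :=
    summable_of_sum_range_le (fun _ => sq_nonneg _)
      (sum_range_discreteLaguerre_sq_le_one hp0 hp1 j)
  refine (tendsto_zero_iff_abs_tendsto_zero _).2 ?_
  simpa only [Real.sqrt_sq_eq_abs, Real.sqrt_zero, Function.comp_def] using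
    hsummable.tendsto_atTop_zero.sqrt

theorem tendsto_discreteLaguerrePred_atTop (hp0 : 0 ≤ p) (hp1 : p < 1) (j : ℕ) :
    Tendsto (discreteLaguerrePred p j) atTop (𝓝 0) := by
  cases j with
  | zero => exact tendsto_const_nhds
  | succ j => exact tendsto_discreteLaguerre_atTop hp0 hp1 j

theorem tendsto_sum_range_discreteLaguerre_mul_of_pred (hp0 : 0 ≤ p) (hp1 : p < 1)
    {j k : ℕ} {s : ℝ}
    (hs : Tendsto (fun T => ∑ t ∈ range T, discreteLaguerrePred p j t *
      discreteLaguerrePred p k t) atTop (𝓝 s)) :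
    Tendsto (fun T => ∑ t ∈ range T, discreteLaguerre p j t * discreteLaguerre p k t) atTop
      (𝓝 (s + (if j = 0 ∧ k = 0 then 1 - p else 0) / (1 - p))) := by
  have hboundary (i : ℕ) : Tendsto
      (fun T => discreteLaguerre p i T + √p * discreteLaguerrePred p i T) atTop (𝓝 0) := by
    simpa using (tendsto_discreteLaguerre_atTop hp0 hp1 i).add
      ((tendsto_discreteLaguerrePred_atTop hp0 hp1 i).const_mul √p)
  have hlim := hs.add (((hboundary j).mul (hboundary k)).const_sub
    (if j = 0 ∧ k = 0 then 1 - p else 0) |>.div_const (1 - p))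
  refine (hlim.congr fun T => ?_).trans (by simp)
  rw [← one_sub_mul_sum_range_discreteLaguerre_mul_sub hp0 hp1.le,
    mul_div_cancel_left₀ _ (sub_pos.2 hp1).ne']
  ring

theorem tendsto_sum_range_discreteLaguerre_mul (hp0 : 0 ≤ p) (hp1 : p < 1) (j k : ℕ) :
    Tendsto (fun T => ∑ t ∈ range T, discreteLaguerre p j t * discreteLaguerre p k t) atTop
      (𝓝 (if j = k then 1 else 0)) := by
  have hp : 1 - p ≠ 0 := (sub_pos.2 hp1).ne'
  induction j generalizing k with
  | zero =>
    have h := tendsto_sum_range_discreteLaguerre_mul_of_pred hp0 hp1 (j := 0) (k := k) (s := 0)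
      (by simp [discreteLaguerrePred])
    rcases k with _ | k
    · simpa [hp] using h
    · simpa using h
  | succ j ih =>
    rcases k with _ | k
    · simpa using tendsto_sum_range_discreteLaguerre_mul_of_pred hp0 hp1 (j := j + 1) (k := 0)
        (s := 0) (by simp [discreteLaguerrePred])
    · simpa using tendsto_sum_range_discreteLaguerre_mul_of_pred hp0 hp1 (j := j + 1)
        (k := k + 1) (ih k)

theorem tendsto_laguerreMatrix_transpose_mul_self (hp0 : 0 ≤ p) (hp1 : p < 1) (L : ℕ) :
    Tendsto (fun T => (laguerreMatrix p T L)ᵀ * laguerreMatrix p T L) atTop (𝓝 1) := by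
  refine tendsto_pi_nhds.2 fun k => tendsto_pi_nhds.2 fun l => ?_
  simpa only [laguerreMatrix_transpose_mul_self_apply, one_apply, Fin.val_inj] using
    tendsto_sum_range_discreteLaguerre_mul hp0 hp1 k l

theorem tendsto_inv_laguerreMatrix_transpose_mul_self (hp0 : 0 ≤ p) (hp1 : p < 1)
    (L : ℕ) :
    Tendsto (fun T => ((laguerreMatrix p T L)ᵀ * laguerreMatrix p T L)⁻¹) atTop (𝓝 1) := by
  have hinv : ContinuousAt Inv.inv (1 : Matrix (Fin L) (Fin L) ℝ) :=
    continuousAt_matrix_inv _ (by simp)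
  simpa only [inv_one, Function.comp_def] using
    hinv.tendsto.comp (tendsto_laguerreMatrix_transpose_mul_self hp0 hp1 L)

end Limits

theorem white_noise_laguerre_covariance_general (p : ℝ) (hp0 : 0 < p) (hp1 : p < 1)
    (L : ℕ) (lam : ℝ)
    (T : ℕ)
    (Ω : Type*) [MeasurableSpace Ω] (μ : Measure Ω)
    (e : Fin T → Ω → ℝ)
    (hint : ∀ s t : Fin T, Integrable (fun ω => e s ω * e t ω) μ)
    (hcov : ∀ s t : Fin T, (∫ ω, e s ω * e t ω ∂μ) = if s = t then lam else 0) :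
    (∀ k l : Fin L,
      (∫ ω, (∑ t : Fin T,
              (((laguerreMatrix p T L)ᵀ * laguerreMatrix p T L)⁻¹ *
                (laguerreMatrix p T L)ᵀ) k t * e t ω) *
            (∑ t : Fin T,
              (((laguerreMatrix p T L)ᵀ * laguerreMatrix p T L)⁻¹ *
                (laguerreMatrix p T L)ᵀ) l t * e t ω) ∂μ) =
        lam * ((laguerreMatrix p T L)ᵀ * laguerreMatrix p T L)⁻¹ k l) ∧
    (∀ ε : ℝ, 0 < ε → ∃ T₀ : ℕ, ∀ T' : ℕ, T₀ ≤ T' →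
      (∀ k l : Fin L,
        |(((laguerreMatrix p T' L)ᵀ * laguerreMatrix p T' L - 1 :
            Matrix (Fin L) (Fin L) ℝ)) k l| < ε) ∧
      (∀ k l : Fin L,
        |((lam • ((((laguerreMatrix p T' L)ᵀ * laguerreMatrix p T' L)⁻¹ *
              (laguerreMatrix p T' L)ᵀ) *
            ((((laguerreMatrix p T' L)ᵀ * laguerreMatrix p T' L)⁻¹ *
              (laguerreMatrix p T' L)ᵀ))ᵀ) - lam • 1 :
            Matrix (Fin L) (Fin L) ℝ)) k l| < ε)) := by
  refine ⟨fun k l => ?_, fun ε hε => ?_⟩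
  · rw [integral_sum_mul_sum_of_white_noise _ hint hcov,
      inv_transpose_mul_self_mul_transpose_mul_transpose]
  · have hcov_limit : Tendsto (fun T' => lam •
        (((laguerreMatrix p T' L)ᵀ * laguerreMatrix p T' L)⁻¹ * (laguerreMatrix p T' L)ᵀ *
          (((laguerreMatrix p T' L)ᵀ * laguerreMatrix p T' L)⁻¹ * (laguerreMatrix p T' L)ᵀ)ᵀ))
        atTop (𝓝 (lam • 1)) := by
      simpa only [inv_transpose_mul_self_mul_transpose_mul_transpose] using
        (tendsto_inv_laguerreMatrix_transpose_mul_self hp0.le hp1 L).const_smul lam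
    exact eventually_atTop.1
      (((tendsto_laguerreMatrix_transpose_mul_self hp0.le hp1 L).eventually_forall_abs_sub_apply_lt
        hε).and (hcov_limit.eventually_forall_abs_sub_apply_lt hε))

/-- Proposition 3: for white time-domain noise of variance `λ`, the Laguerre-domain
distortion `E_lag = Ψ_p E_time` has covariance `λ (ΦᵀΦ)⁻¹`; moreover `ΦᵀΦ → I_L` as
`T → ∞`, hence the covariance `λ Ψ_p Ψ_pᵀ` converges (entrywise, equivalently in sup
norm) to `λ I_L`. -/
theorem white_noise_laguerre_covariance (p : ℝ) (hp0 : 0 < p) (hp1 : p < 1)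
    (L : ℕ) (lam : ℝ) (hlam : 0 < lam)
    (T : ℕ) (hTL : L ≤ T)
    (hinv : IsUnit ((laguerreMatrix p T L)ᵀ * laguerreMatrix p T L).det)
    (Ω : Type*) [MeasurableSpace Ω] (μ : Measure Ω) [IsProbabilityMeasure μ]
    (e : Fin T → Ω → ℝ)
    (hmean : ∀ t : Fin T, ∫ ω, e t ω ∂μ = 0)
    (hint : ∀ s t : Fin T, Integrable (fun ω => e s ω * e t ω) μ)
    (hcov : ∀ s t : Fin T, (∫ ω, e s ω * e t ω ∂μ) = if s = t then lam else 0) :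
    (∀ k l : Fin L,
      (∫ ω, (∑ t : Fin T,
              (((laguerreMatrix p T L)ᵀ * laguerreMatrix p T L)⁻¹ *
                (laguerreMatrix p T L)ᵀ) k t * e t ω) *
            (∑ t : Fin T,
              (((laguerreMatrix p T L)ᵀ * laguerreMatrix p T L)⁻¹ *
                (laguerreMatrix p T L)ᵀ) l t * e t ω) ∂μ) =
        lam * ((laguerreMatrix p T L)ᵀ * laguerreMatrix p T L)⁻¹ k l) ∧
    (∀ ε : ℝ, 0 < ε → ∃ T₀ : ℕ, ∀ T' : ℕ, T₀ ≤ T' →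
      (∀ k l : Fin L,
        |(((laguerreMatrix p T' L)ᵀ * laguerreMatrix p T' L - 1 :
            Matrix (Fin L) (Fin L) ℝ)) k l| < ε) ∧
      (∀ k l : Fin L,
        |((lam • ((((laguerreMatrix p T' L)ᵀ * laguerreMatrix p T' L)⁻¹ *
              (laguerreMatrix p T' L)ᵀ) *
            ((((laguerreMatrix p T' L)ᵀ * laguerreMatrix p T' L)⁻¹ *
              (laguerreMatrix p T' L)ᵀ))ᵀ) - lam • 1 :
            Matrix (Fin L) (Fin L) ℝ)) k l| < ε)) :=
  white_noise_laguerre_covariance_general p hp0 hp1 L lam T Ω μ e hint hcov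
end

section
/- Let 0 < p < 1 and τ ∈ ℕ with τ ≥ 1, and define h_0 = (√p)^τ, h_m = (1−p)·L^{(τ)}_m(√p) for m ≥ 1, α = √p + 1/√p, β = √p − 1/√p. For any M ≥ 1 define a, b ∈ ℝ^M by a_i = (i+1)·h_{i+1} + i·α·h_i + (i−1)·h_{i−1} and b_i = β·h_i for i = 1,…,M. Then a = −τ·b; moreover h_1 = τ·(1−p)·(√p)^{τ−1} ≠ 0, so b ≠ 0 and the delay is recovered in closed form as τ = −(b^T·a)/(b^T·b). -/
/-- The Markov parameters of the `τ`-step delay in Laguerre-domain: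
`h_0 = (√p)^τ` and `h_m = (1−p)·L_m^{(τ)}(√p)` for `m ≥ 1`. -/
noncomputable def delayMarkov (p : ℝ) (τ : ℕ) (m : ℕ) : ℝ :=
  if m = 0 then Real.sqrt p ^ τ else (1 - p) * delayLaguerrePoly p τ m

/-! The sum in `L_m^{(τ)}(√p)` is the coefficient of `x^(τ-1)` in
`G_m = (1 + p x)^(-(m+1)) (1 + x)^(m-1)`. Since `G_(m±1) = G_m ((1 + x) / (1 + p x))^(±1)`, these
series satisfy the first-order identity
`(m+1) p G_(m+1) + (m-1) G_(m-1) - m (1+p) G_m = (p-1) (x G_m)'`, and taking the coefficient of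
`x^(τ-1)` turns the derivative into the factor `τ`. Absorbing the powers of `-√p`, this is the
recurrence `(m+1) h_(m+1) + m α h_m + (m-1) h_(m-1) = -τ β h_m`, i.e. `a = -τ b`; since
`b_1 = β h_1 ≠ 0`, the least-squares quotient recovers `τ`. -/

open PowerSeries

theorem natCast_mul_pow_sub_one_mul {M : Type*} [CommSemiring M] (x : M) (k : ℕ) :
    (k : M) * x ^ (k - 1) * x = k * x ^ k := by
  cases k <;> simp [pow_succ, mul_assoc]

namespace PowerSeries
variable {R : Type*} [CommRing R]

noncomputable def invOneAddMulX (p : R) : R⟦X⟧ := rescale (-p) (mk 1)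

theorem invOneAddMulX_mul (p : R) : invOneAddMulX p * (1 + C p * X) = 1 := by
  have h := congrArg (rescale (-p)) (mk_one_mul_one_sub_eq_one R)
  simpa [invOneAddMulX, rescale_X, sub_eq_add_neg] using h

theorem derivative_invOneAddMulX (p : R) :
    d⁄dX R (invOneAddMulX p) = -C p * invOneAddMulX p ^ 2 := by
  have h := congrArg (d⁄dX R) (invOneAddMulX_mul p)
  simp only [Derivation.leibniz, map_add, derivative_C, derivative_X,
    smul_eq_mul, Derivation.map_one_eq_zero] at h
  linear_combination (invOneAddMulX p) * h - (d⁄dX R (invOneAddMulX p)) * invOneAddMulX_mul p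

theorem coeff_invOneAddMulX_pow (p : R) (d n : ℕ) :
    coeff n (invOneAddMulX p ^ (d + 1)) = (d + n).choose d * (-p) ^ n := by
  rw [invOneAddMulX, ← map_pow, mk_one_pow_eq_mk_choose_add, coeff_rescale, coeff_mk, mul_comm]

theorem coeff_one_add_X_pow (k n : ℕ) : coeff n ((1 + X : R⟦X⟧) ^ k) = k.choose n := by
  rw [← Polynomial.coeff_one_add_X_pow R k n, ← Polynomial.coeff_coe]
  push_cast
  rfl

end PowerSeries

section
variable {R : Type*} [CommRing R]

noncomputable def delayGen (p : R) (m : ℕ) : R⟦X⟧ :=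
  invOneAddMulX p ^ (m + 1) * (1 + X) ^ (m - 1)

theorem coeff_delayGen (p : R) (m n : ℕ) :
    coeff n (delayGen p m) =
      ∑ i ∈ Finset.range (n + 1),
        ((m + i).choose i : R) * (m - 1).choose (n - i) * (-p) ^ i := by
  rw [delayGen, coeff_mul, Finset.Nat.sum_antidiagonal_eq_sum_range_succ_mk]
  refine Finset.sum_congr rfl fun i _ => ?_
  rw [coeff_invOneAddMulX_pow, coeff_one_add_X_pow, Nat.choose_symm_add]
  ring

theorem delayGen_recurrence (p : R) (k : ℕ) :
    C ((k + 2) * p) * delayGen p (k + 2) + C (k : R) * delayGen p k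
        - C ((k + 1) * (1 + p)) * delayGen p (k + 1) =
      C (p - 1) * d⁄dX R (X * delayGen p (k + 1)) := by
  simp only [delayGen, Nat.add_sub_cancel, Derivation.leibniz, Derivation.leibniz_pow, map_add,
    map_mul, map_sub, map_natCast, map_ofNat, map_one, derivative_X, derivative_invOneAddMulX,
    Derivation.map_one_eq_zero, smul_eq_mul, nsmul_eq_mul, show k + 2 - 1 = k + 1 from rfl,
    show k + 1 + 1 = k + 2 from rfl]
  push_cast
  -- `hU` absorbs the truncated exponent `k - 1` of `1 + X` at `k = 0`.
  have hU := natCast_mul_pow_sub_one_mul (1 + X : R⟦X⟧) k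
  have hW := invOneAddMulX_mul p
  linear_combination invOneAddMulX p ^ (k + 2) * hU
    + ((k + 2) * C p * (1 + X) ^ k * invOneAddMulX p ^ (k + 2)
      - k * invOneAddMulX p ^ (k + 1) * (1 + X) ^ (k - 1)) * hW

theorem coeff_delayGen_recurrence (p : R) (k n : ℕ) :
    (k + 2) * p * coeff n (delayGen p (k + 2)) + k * coeff n (delayGen p k)
        - (k + 1) * (1 + p) * coeff n (delayGen p (k + 1)) =
      (p - 1) * (n + 1) * coeff n (delayGen p (k + 1)) := by
  have h := congrArg (coeff n) (delayGen_recurrence p k)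
  rw [coeff_C_mul, coeff_derivative, coeff_succ_X_mul] at h
  simp only [map_sub, map_add, coeff_C_mul] at h
  linear_combination h

end

section
variable {p : ℝ} {τ : ℕ}

theorem delayLaguerrePoly_eq_coeff (hτ : 1 ≤ τ) (m : ℕ) :
    delayLaguerrePoly p τ m = (-√p) ^ ((m : ℤ) - τ) * coeff (τ - 1) (delayGen p m) := by
  rw [delayLaguerrePoly, coeff_delayGen, Nat.sub_add_cancel hτ]
  refine congrArg _ (Finset.sum_congr rfl fun i _ => ?_)
  rw [Nat.sub_right_comm]

theorem delayMarkov_of_ne_zero (hτ : 1 ≤ τ) {m : ℕ} (hm : m ≠ 0) :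
    delayMarkov p τ m = (1 - p) * (-√p) ^ ((m : ℤ) - τ) * coeff (τ - 1) (delayGen p m) := by
  rw [delayMarkov, if_neg hm, delayLaguerrePoly_eq_coeff hτ, mul_assoc]

theorem delayMarkov_one (hp : 0 < p) (hτ : 1 ≤ τ) :
    delayMarkov p τ 1 = τ * (1 - p) * √p ^ (τ - 1) := by
  have hs : -√p ≠ 0 := neg_ne_zero.mpr (Real.sqrt_pos.mpr hp).ne'
  have hneg : -p = -√p * √p := by rw [neg_mul, Real.mul_self_sqrt hp.le]
  have hcoeff : coeff (τ - 1) (delayGen p 1) = τ * (-√p) ^ (τ - 1) * √p ^ (τ - 1) := by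
    rw [delayGen, Nat.sub_self, pow_zero, mul_one, coeff_invOneAddMulX_pow, Nat.choose_one_right,
      Nat.add_sub_cancel' hτ, hneg, mul_pow, mul_assoc]
  have hpow : (-√p) ^ ((1 : ℕ) - (τ : ℤ)) * (-√p) ^ (τ - 1) = 1 := by
    rw [← zpow_natCast, ← zpow_add₀ hs, Nat.cast_sub hτ]
    simp
  rw [delayMarkov_of_ne_zero hτ one_ne_zero, hcoeff]
  linear_combination τ * (1 - p) * √p ^ (τ - 1) * hpow

theorem delayMarkov_recurrence (hp : 0 < p) (hτ : 1 ≤ τ) (k : ℕ) :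
    ((k : ℝ) + 2) * delayMarkov p τ (k + 2)
      + ((k : ℝ) + 1) * (√p + 1 / √p) * delayMarkov p τ (k + 1) + k * delayMarkov p τ k =
      -(τ : ℝ) * (√p - 1 / √p) * delayMarkov p τ (k + 1) := by
  have hs : √p ≠ 0 := (Real.sqrt_pos.mpr hp).ne'
  have hss : √p ^ 2 = p := Real.sq_sqrt hp.le
  set w := (-√p) ^ ((k : ℤ) - τ)
  have h2 : delayMarkov p τ (k + 2) =
      (1 - p) * (w * √p ^ 2) * coeff (τ - 1) (delayGen p (k + 2)) := by
    rw [delayMarkov_of_ne_zero hτ (by omega), ← neg_sq, ← zpow_natCast,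
      ← zpow_add₀ (neg_ne_zero.mpr hs)]
    push_cast
    ring_nf
  have h1 : delayMarkov p τ (k + 1) =
      (1 - p) * (w * (-√p)) * coeff (τ - 1) (delayGen p (k + 1)) := by
    rw [delayMarkov_of_ne_zero hτ (by omega), ← zpow_add_one₀ (neg_ne_zero.mpr hs)]
    push_cast
    ring_nf
  -- `h₀ = √p ^ τ` breaks the general formula, but it enters only with the factor `k = 0`.
  have h0 : (k : ℝ) * delayMarkov p τ k = k * ((1 - p) * w * coeff (τ - 1) (delayGen p k)) := by
    rcases Nat.eq_zero_or_pos k with rfl | hk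
    · simp
    · rw [delayMarkov_of_ne_zero hτ hk.ne']
  have hinv : √p * (1 / √p) = 1 := mul_one_div_cancel hs
  have hc := coeff_delayGen_recurrence p k (τ - 1)
  push_cast [Nat.cast_sub hτ] at hc
  set c₀ := coeff (τ - 1) (delayGen p k)
  set c₁ := coeff (τ - 1) (delayGen p (k + 1))
  set c₂ := coeff (τ - 1) (delayGen p (k + 2))
  rw [h2, h1, h0]
  linear_combination (1 - p) * w * hc + (1 - p) * w * ((k + 2) * c₂ - (k + 1 + τ) * c₁) * hss
    + (1 - p) * w * (τ - (k + 1)) * c₁ * hinv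
end

theorem eq_dotProduct_div_of_eq_smul {K ι : Type*} [Field K] [LinearOrder K]
    [IsStrictOrderedRing K] [Fintype ι] {a b : ι → K} {c : K} (hb : b ≠ 0) (h : a = c • b) :
    c = (∑ i, b i * a i) / ∑ i, b i * b i := by
  have hbb : b ⬝ᵥ b ≠ 0 := dotProduct_self_eq_zero.not.mpr hb
  change c = b ⬝ᵥ a / b ⬝ᵥ b
  rw [h, dotProduct_smul, smul_eq_mul, mul_div_assoc, div_self hbb, mul_one]

/-- Closed-form recovery of the delay: with `a_i = (i+1)h_{i+1} + iαh_i + (i−1)h_{i−1}`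
and `b_i = βh_i` for `i = 1, …, M`, one has `a = −τ·b`, `h₁ = τ(1−p)(√p)^{τ−1} ≠ 0`
(so `b ≠ 0`), and `τ = −(bᵀa)/(bᵀb)`. -/
theorem delay_closed_form (p : ℝ) (hp0 : 0 < p) (hp1 : p < 1)
    (τ : ℕ) (hτ : 1 ≤ τ) (α β : ℝ)
    (hα : α = Real.sqrt p + 1 / Real.sqrt p) (hβ : β = Real.sqrt p - 1 / Real.sqrt p)
    (M : ℕ) (hM : 1 ≤ M) (a b : Fin M → ℝ)
    (ha : ∀ i : Fin M, a i =
      (((i : ℕ) + 1 : ℝ) + 1) * delayMarkov p τ ((i : ℕ) + 1 + 1) +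
        (((i : ℕ) + 1 : ℝ)) * α * delayMarkov p τ ((i : ℕ) + 1) +
        (((i : ℕ) + 1 : ℝ) - 1) * delayMarkov p τ (i : ℕ))
    (hb : ∀ i : Fin M, b i = β * delayMarkov p τ ((i : ℕ) + 1)) :
    a = -(τ : ℝ) • b ∧
      delayMarkov p τ 1 = (τ : ℝ) * (1 - p) * Real.sqrt p ^ (τ - 1) ∧
      delayMarkov p τ 1 ≠ 0 ∧ b ≠ 0 ∧
      (τ : ℝ) = -(∑ i : Fin M, b i * a i) / (∑ i : Fin M, b i * b i) := by
  have hs : 0 < √p := Real.sqrt_pos.mpr hp0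
  have h₁ := delayMarkov_one hp0 hτ
  have h₁_ne : delayMarkov p τ 1 ≠ 0 := by
    have : 0 < 1 - p := sub_pos.mpr hp1
    rw [h₁]
    positivity
  have hβ_ne : β ≠ 0 := by
    have : √p * β = p - 1 := by
      rw [hβ, mul_sub, mul_one_div_cancel hs.ne', Real.mul_self_sqrt hp0.le]
    intro h
    rw [h, mul_zero] at this
    linarith
  have hab : a = -(τ : ℝ) • b := funext fun i => by
    rw [ha, Pi.smul_apply, hb, smul_eq_mul, hα, hβ]
    linear_combination delayMarkov_recurrence hp0 hτ i
  have hb_ne : b ≠ 0 := fun h =>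
    mul_ne_zero hβ_ne h₁_ne (by simpa [hb] using congrFun h ⟨0, hM⟩)
  refine ⟨hab, h₁, h₁_ne, hb_ne, ?_⟩
  rw [neg_div, ← eq_dotProduct_div_of_eq_smul hb_ne hab, neg_neg]
end

section
/- (Noise reduction via BLE in Laguerre-domain.) Let Φ ∈ ℝ^{T×L} have full column rank, Ψ = (Φ^TΦ)^{-1}Φ^T, 1 ≤ m < L, Φ_m the first m columns of Φ, Φ_{m+1:L} the last L−m columns of Φ, and Ξ the first m rows of Ψ. Let Y_time ∈ ℝ^T satisfy Ξ·Y_time = 0, let E_time ∈ ℝ^T be arbitrary, and set Y_meas = Y_time + E_time. Write Ψ·E_time = (E⁽¹⁾, E⁽²⁾) with E⁽¹⁾ ∈ ℝ^m, E⁽²⁾ ∈ ℝ^{L−m}. For any matrices Σ₂₁ ∈ ℝ^{(L−m)×m} and invertible Σ₁₁ ∈ ℝ^{m×m}, define the noise estimate Ê_time = Φ_m·Ξ·Y_meas + Φ_{m+1:L}·Σ₂₁Σ₁₁^{-1}·Ξ·Y_meas. Then Ψ·(Y_meas − Ê_time) = Ψ·Y_time + (0, E⁽²⁾ − Σ₂₁Σ₁₁^{-1}·E⁽¹⁾),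 where the first m entries of the correction vector are zero. -/
open Matrix

lemma isUnit_det_of_rank_eq_card {n : ℕ} (A : Matrix (Fin n) (Fin n) ℝ)
    (h : A.rank = n) : IsUnit A.det := by
  rw [← Matrix.isUnit_iff_isUnit_det, ← Matrix.mulVec_surjective_iff_isUnit]
  have htop : LinearMap.range A.mulVecLin = ⊤ := by
    apply Submodule.eq_top_of_finrank_eq
    rw [← Matrix.rank, h]
    simp [Module.finrank_pi]
  intro y
  have := htop ▸ Submodule.mem_top (x := y) (R := ℝ)
  obtain ⟨x, hx⟩ := this
  exact ⟨x, hx⟩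

/-- Noise reduction via the best linear estimator in Laguerre-domain: subtracting the
BLE-based noise estimate from the measurement leaves the first `m` Laguerre
coefficients of the noise-free output untouched and replaces the distortion in the
last `L − m` coefficients by the BLE residual `E⁽²⁾ − Σ₂₁Σ₁₁⁻¹E⁽¹⁾`. -/
theorem ble_noise_reduction (T L m : ℕ) (hm : 1 ≤ m) (hmL : m < L)
    (Φ : Matrix (Fin T) (Fin L) ℝ) (hrank : Φ.rank = L)
    (Ψ : Matrix (Fin L) (Fin T) ℝ) (hΨ : Ψ = (Φᵀ * Φ)⁻¹ * Φᵀ)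
    (Φm : Matrix (Fin T) (Fin m) ℝ)
    (hΦm : ∀ (t : Fin T) (i : Fin m), Φm t i = Φ t (Fin.castLE hmL.le i))
    (Φrest : Matrix (Fin T) (Fin (L - m)) ℝ)
    (hΦrest : ∀ (t : Fin T) (j : Fin (L - m)),
      Φrest t j = Φ t ⟨m + (j : ℕ), by have := j.isLt; omega⟩)
    (Ξ : Matrix (Fin m) (Fin T) ℝ)
    (hΞ : ∀ (i : Fin m) (t : Fin T), Ξ i t = Ψ (Fin.castLE hmL.le i) t)
    (Ytime Etime Ymeas : Fin T → ℝ)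
    (hY : Ξ.mulVec Ytime = 0) (hYmeas : Ymeas = Ytime + Etime)
    (E1 : Fin m → ℝ) (hE1 : ∀ i : Fin m, E1 i = Ψ.mulVec Etime (Fin.castLE hmL.le i))
    (E2 : Fin (L - m) → ℝ)
    (hE2 : ∀ j : Fin (L - m),
      E2 j = Ψ.mulVec Etime ⟨m + (j : ℕ), by have := j.isLt; omega⟩)
    (S21 : Matrix (Fin (L - m)) (Fin m) ℝ) (S11 : Matrix (Fin m) (Fin m) ℝ)
    (hinv : IsUnit S11.det)
    (Ehat : Fin T → ℝ)
    (hEhat : Ehat = Φm.mulVec (Ξ.mulVec Ymeas) +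
      Φrest.mulVec ((S21 * S11⁻¹).mulVec (Ξ.mulVec Ymeas))) :
    Ψ.mulVec (Ymeas - Ehat) = Ψ.mulVec Ytime + fun k : Fin L =>
      if h : (k : ℕ) < m then 0
      else (E2 - (S21 * S11⁻¹).mulVec E1) ⟨(k : ℕ) - m, by have := k.isLt; omega⟩ := by
  -- Φᵀ * Φ is invertible
  have hG : IsUnit (Φᵀ * Φ).det := by
    apply isUnit_det_of_rank_eq_card
    rw [Matrix.rank_transpose_mul_self, hrank]
  -- Ψ * Φ = 1
  have hone : Ψ * Φ = 1 := by
    rw [hΨ, Matrix.mul_assoc, Matrix.nonsing_inv_mul _ hG]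
  -- Ξ applied to Etime is E1, and Ξ Ymeas = E1
  have hΞE : Ξ.mulVec Etime = E1 := by
    funext i
    rw [hE1]
    simp only [Matrix.mulVec, dotProduct]
    exact Finset.sum_congr rfl fun t _ => by rw [hΞ]
  have hΞY : Ξ.mulVec Ymeas = E1 := by
    rw [hYmeas, Matrix.mulVec_add, hY, zero_add, hΞE]
  -- key computations for Ψ * Φm and Ψ * Φrest
  have hΨΦm : ∀ (v : Fin m → ℝ) (k : Fin L), Ψ.mulVec (Φm.mulVec v) k =
      if h : (k : ℕ) < m then v ⟨k, h⟩ else 0 := by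
    intro v k
    rw [Matrix.mulVec_mulVec]
    have hentry : ∀ i : Fin m, (Ψ * Φm) k i = (1 : Matrix (Fin L) (Fin L) ℝ) k (Fin.castLE hmL.le i) := by
      intro i
      rw [← hone]
      simp only [Matrix.mul_apply]
      exact Finset.sum_congr rfl fun t _ => by rw [hΦm]
    simp only [Matrix.mulVec, dotProduct, hentry, Matrix.one_apply]
    by_cases h : (k : ℕ) < m
    · rw [dif_pos h]
      rw [Finset.sum_eq_single (⟨(k : ℕ), h⟩ : Fin m)]
      · rw [if_pos (by ext; simp), one_mul]
      · intro i _ hi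
        rw [if_neg, zero_mul]
        intro hc
        apply hi
        ext
        have : (k : ℕ) = (i : ℕ) := congrArg Fin.val hc
        simp [← this]
      · intro h'; exact absurd (Finset.mem_univ _) h'
    · rw [dif_neg h]
      apply Finset.sum_eq_zero
      intro i _
      rw [if_neg, zero_mul]
      intro hc
      apply h
      have : (k : ℕ) = (i : ℕ) := congrArg Fin.val hc
      omega
  have hΨΦrest : ∀ (w : Fin (L - m) → ℝ) (k : Fin L), Ψ.mulVec (Φrest.mulVec w) k =
      if h : (k : ℕ) < m then 0 else w ⟨(k : ℕ) - m, by have := k.isLt; omega⟩ := by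
    intro w k
    rw [Matrix.mulVec_mulVec]
    have hentry : ∀ j : Fin (L - m), (Ψ * Φrest) k j =
        (1 : Matrix (Fin L) (Fin L) ℝ) k ⟨m + (j : ℕ), by have := j.isLt; omega⟩ := by
      intro j
      rw [← hone]
      simp only [Matrix.mul_apply]
      exact Finset.sum_congr rfl fun t _ => by rw [hΦrest]
    simp only [Matrix.mulVec, dotProduct, hentry, Matrix.one_apply]
    by_cases h : (k : ℕ) < m
    · rw [dif_pos h]
      apply Finset.sum_eq_zero
      intro j _
      rw [if_neg, zero_mul]
      intro hc
      have : (k : ℕ) = m + (j : ℕ) := congrArg Fin.val hc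
      omega
    · rw [dif_neg h]
      rw [Finset.sum_eq_single (⟨(k : ℕ) - m, by have := k.isLt; omega⟩ : Fin (L - m))]
      · rw [if_pos (by ext; simp; omega), one_mul]
      · intro j _ hj
        rw [if_neg, zero_mul]
        intro hc
        apply hj
        have : (k : ℕ) = m + (j : ℕ) := congrArg Fin.val hc
        ext
        simp
        omega
      · intro h'; exact absurd (Finset.mem_univ _) h'
  -- Ψ Etime entries
  have hΨE1 : ∀ (k : Fin L) (h : (k : ℕ) < m), Ψ.mulVec Etime k = E1 ⟨k, h⟩ := by
    intro k h
    rw [hE1]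
    congr 1
  have hΨE2 : ∀ (k : Fin L) (h : ¬ (k : ℕ) < m),
      Ψ.mulVec Etime k = E2 ⟨(k : ℕ) - m, by have := k.isLt; omega⟩ := by
    intro k h
    rw [hE2]
    congr 1
    ext
    simp
    omega
  funext k
  simp only [Pi.add_apply, Pi.sub_apply]
  rw [hYmeas, hEhat]
  have expand : Ytime + Etime - (Φm.mulVec (Ξ.mulVec Ymeas) +
      Φrest.mulVec ((S21 * S11⁻¹).mulVec (Ξ.mulVec Ymeas))) =
      Ytime + (Etime - Φm.mulVec (Ξ.mulVec Ymeas) -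
      Φrest.mulVec ((S21 * S11⁻¹).mulVec (Ξ.mulVec Ymeas))) := by ring
  rw [expand, Matrix.mulVec_add, Matrix.mulVec_sub, Matrix.mulVec_sub]
  simp only [Pi.add_apply, Pi.sub_apply]
  rw [hΨΦm, hΨΦrest, hΞY]
  by_cases h : (k : ℕ) < m
  · rw [dif_pos h, dif_pos h, dif_pos h, hΨE1 k h]
    ring
  · rw [dif_neg h, dif_neg h, dif_neg h, hΨE2 k h]
    show _ = _ + (E2 _ - (S21 * S11⁻¹).mulVec E1 _)
    ring
end
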